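/- arXiv:nlin/0409009 — 4 statements merged into one kernel-verified Lean document; each statement's English description precedes it below -/
import Mathlib

section
/- There is a constant C such that for all t ∈ ℝ with |t| ≥ 1 and all s ∈ ℝ, the oscillatory integral |∫₀¹ exp(−i t (sin²(x) − s x)) dx| ≤ C |t|^{−1/3}. -/
set_option maxHeartbeats 1000000

open Real MeasureTheory Set

noncomputable def E (t r : ℝ) : ℂ := Complex.exp (-Complex.I * t * r)

lemma norm_E (t r : ℝ) : ‖E t r‖ = 1 := by
  simp [E, Complex.norm_exp]

lemma hasDerivAt_E {φ ψ : ℝ → ℝ} {t : ℝ} (hφ : ∀ x, HasDerivAt φ (ψ x) x) (x : ℝ) :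
    HasDerivAt (fun x => E t (φ x)) (E t (φ x) * (-Complex.I * t * ψ x)) x :=
  (((hφ x).ofReal_comp).const_mul (-Complex.I * t)).cexp

lemma continuous_E {φ : ℝ → ℝ} {t : ℝ} (hφ : Continuous φ) :
    Continuous fun x => E t (φ x) :=
  Complex.continuous_exp.comp (by continuity)

lemma lemA {φ ψ ψ' : ℝ → ℝ} (hφ : ∀ x, HasDerivAt φ (ψ x) x)
    (hψd : ∀ x, HasDerivAt ψ (ψ' x) x) (hψ'c : Continuous ψ')
    {a b t ε : ℝ} (hab : a ≤ b) (ht : t ≠ 0) (hε : 0 < ε)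
    (hlow : ∀ x ∈ Icc a b, ε ≤ |ψ x|)
    (hsign : (∀ x ∈ Icc a b, 0 ≤ ψ' x) ∨ (∀ x ∈ Icc a b, ψ' x ≤ 0)) :
    ‖∫ x in a..b, E t (φ x)‖ ≤ 4 / (|t| * ε) := by
  have ht' : 0 < |t| := abs_pos.mpr ht
  have huIcc : Set.uIcc a b = Icc a b := uIcc_of_le hab
  have hψne : ∀ x ∈ Icc a b, ψ x ≠ 0 := by
    intro x hx h
    have := hlow x hx
    rw [h] at this; simp at this; linarith
  have hφc : Continuous φ := Differentiable.continuous fun x => (hφ x).differentiableAt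
  have hψc : Continuous ψ := Differentiable.continuous fun x => (hψd x).differentiableAt
  set F : ℝ → ℂ := fun x => E t (φ x) with hFdef
  set c : ℝ → ℂ := fun x => -Complex.I * t * ψ x with hcdef
  have hcc : Continuous c := by simp only [hcdef]; continuity
  have hcne : ∀ x ∈ Icc a b, c x ≠ 0 := by
    intro x hx
    simp only [hcdef]
    simp only [mul_ne_zero_iff]
    refine ⟨⟨neg_ne_zero.mpr Complex.I_ne_zero, ?_⟩, ?_⟩
    · exact_mod_cast ht
    · exact_mod_cast hψne x hx
  have hnc : ∀ x, ‖c x‖ = |t| * |ψ x| := by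
    intro x
    simp [hcdef, map_mul, Complex.norm_real, Complex.norm_I]
  set g : ℝ → ℂ := fun x => (c x)⁻¹ with hgdef
  set g' : ℝ → ℂ := fun x => -(-Complex.I * t * (ψ' x : ℂ)) / (c x) ^ 2 with hg'def
  have hg : ∀ x ∈ Set.uIcc a b, HasDerivAt g (g' x) x := by
    intro x hx; rw [huIcc] at hx
    have hcd : HasDerivAt c (-Complex.I * t * (ψ' x : ℂ)) x :=
      ((hψd x).ofReal_comp).const_mul _
    have hinv : HasDerivAt (fun y : ℂ => y⁻¹) (-((c x) ^ 2)⁻¹) (c x) :=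
      hasDerivAt_inv (hcne x hx)
    have h3 := hinv.comp x hcd
    refine h3.congr_deriv ?_
    rw [hg'def]
    field_simp
  have hFd : ∀ x ∈ Set.uIcc a b, HasDerivAt F (F x * c x) x := fun x _ => hasDerivAt_E hφ x
  have hg'int : IntervalIntegrable g' volume a b := by
    apply ContinuousOn.intervalIntegrable
    rw [huIcc]
    apply ContinuousOn.div
    · exact (Continuous.continuousOn (by continuity))
    · exact (hcc.pow 2).continuousOn
    · intro x hx; exact pow_ne_zero 2 (hcne x hx)
  have hF'int : IntervalIntegrable (fun x => F x * c x) volume a b :=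
    ((continuous_E hφc).mul hcc).intervalIntegrable a b
  have IBP := intervalIntegral.integral_mul_deriv_eq_deriv_mul hg hFd hg'int hF'int
  have heq : ∫ x in a..b, F x = ∫ x in a..b, g x * (F x * c x) := by
    apply intervalIntegral.integral_congr
    intro x hx; rw [huIcc] at hx
    have := hcne x hx
    simp only [hgdef]
    field_simp
  -- bound for the boundary terms
  have hng : ∀ x ∈ Icc a b, ‖g x‖ ≤ (|t| * ε)⁻¹ := by
    intro x hx
    rw [hgdef]
    simp only [norm_inv, hnc]
    apply inv_anti₀ (by positivity)
    exact mul_le_mul_of_nonneg_left (hlow x hx) (le_of_lt ht')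
  -- the J integral
  have hψsqc : ContinuousOn (fun x => ψ' x / ψ x ^ 2) (Icc a b) :=
    ContinuousOn.div hψ'c.continuousOn (hψc.pow 2).continuousOn
      (fun x hx => pow_ne_zero 2 (hψne x hx))
  have hJint : IntervalIntegrable (fun x => ψ' x / ψ x ^ 2) volume a b :=
    ContinuousOn.intervalIntegrable (by rw [huIcc]; exact hψsqc)
  have hJ : ∫ x in a..b, ψ' x / ψ x ^ 2 = (ψ a)⁻¹ - (ψ b)⁻¹ := by
    have hder : ∀ x ∈ Set.uIcc a b, HasDerivAt (fun y => -(ψ y)⁻¹) (ψ' x / ψ x ^ 2) x := by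
      intro x hx; rw [huIcc] at hx
      have h1 := ((hψd x).inv (hψne x hx)).neg
      refine h1.congr_deriv ?_
      ring
    rw [intervalIntegral.integral_eq_sub_of_hasDerivAt hder hJint]
    ring
  have hJbound : |(ψ a)⁻¹ - (ψ b)⁻¹| ≤ 2 / ε := by
    have h1 : |(ψ a)⁻¹| ≤ ε⁻¹ := by
      rw [abs_inv]
      exact inv_anti₀ hε (hlow a ⟨le_refl a, hab⟩)
    have h2 : |(ψ b)⁻¹| ≤ ε⁻¹ := by
      rw [abs_inv]
      exact inv_anti₀ hε (hlow b ⟨hab, le_refl b⟩)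
    calc |(ψ a)⁻¹ - (ψ b)⁻¹| ≤ |(ψ a)⁻¹| + |(ψ b)⁻¹| := abs_sub _ _
      _ ≤ ε⁻¹ + ε⁻¹ := add_le_add h1 h2
      _ = 2 / ε := by rw [div_eq_mul_inv]; ring
  -- bound for ∫ g' F
  have hnorm_g'F : ∀ x ∈ Icc a b, ‖g' x * F x‖ = |ψ' x| / (|t| * ψ x ^ 2) := by
    intro x hx
    rw [norm_mul]
    have : ‖F x‖ = 1 := norm_E t (φ x)
    rw [this, mul_one, hg'def]
    simp only [norm_div, norm_neg, norm_pow, hnc]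
    have h1 : ‖-Complex.I * (t:ℂ) * (ψ' x : ℂ)‖ = |t| * |ψ' x| := by
      simp [map_mul, Complex.norm_real, Complex.norm_I]
    rw [h1]
    rw [mul_pow, sq_abs, ← sq_abs t]
    have hψx : ψ x ≠ 0 := hψne x hx
    field_simp
    linear_combination (-|ψ' x|) * sq_abs (ψ x)
  have hintgF : ‖∫ x in a..b, g' x * F x‖ ≤ 2 / (|t| * ε) := by
    calc ‖∫ x in a..b, g' x * F x‖ ≤ ∫ x in a..b, ‖g' x * F x‖ :=
          intervalIntegral.norm_integral_le_integral_norm hab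
      _ ≤ 2 / (|t| * ε) := by
          rcases hsign with hs | hs
          · have heq2 : ∫ x in a..b, ‖g' x * F x‖ = ∫ x in a..b, |t|⁻¹ * (ψ' x / ψ x ^ 2) := by
              apply intervalIntegral.integral_congr
              intro x hx; rw [huIcc] at hx
              show ‖g' x * F x‖ = _
              rw [hnorm_g'F x hx, abs_of_nonneg (hs x hx)]
              field_simp
            rw [heq2, intervalIntegral.integral_const_mul, hJ]
            calc |t|⁻¹ * ((ψ a)⁻¹ - (ψ b)⁻¹) ≤ |t|⁻¹ * (2 / ε) := by
                  apply mul_le_mul_of_nonneg_left _ (by positivity)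
                  exact le_trans (le_abs_self _) hJbound
              _ = 2 / (|t| * ε) := by field_simp
          · have heq2 : ∫ x in a..b, ‖g' x * F x‖ = ∫ x in a..b, |t|⁻¹ * (-(ψ' x / ψ x ^ 2)) := by
              apply intervalIntegral.integral_congr
              intro x hx; rw [huIcc] at hx
              show ‖g' x * F x‖ = _
              rw [hnorm_g'F x hx, abs_of_nonpos (hs x hx)]
              field_simp
            rw [heq2, intervalIntegral.integral_const_mul, intervalIntegral.integral_neg, hJ]
            calc |t|⁻¹ * -((ψ a)⁻¹ - (ψ b)⁻¹) ≤ |t|⁻¹ * (2 / ε) := by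
                  apply mul_le_mul_of_nonneg_left _ (by positivity)
                  exact le_trans (neg_le_abs _) hJbound
              _ = 2 / (|t| * ε) := by field_simp
  -- conclusion
  rw [heq, IBP]
  have hFa : ‖F a‖ = 1 := norm_E t (φ a)
  have hFb : ‖F b‖ = 1 := norm_E t (φ b)
  calc ‖g b * F b - g a * F a - ∫ x in a..b, g' x * F x‖
      ≤ ‖g b * F b - g a * F a‖ + ‖∫ x in a..b, g' x * F x‖ := norm_sub_le _ _
    _ ≤ ‖g b * F b‖ + ‖g a * F a‖ + ‖∫ x in a..b, g' x * F x‖ := by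
        gcongr; exact norm_sub_le _ _
    _ ≤ (|t| * ε)⁻¹ * 1 + (|t| * ε)⁻¹ * 1 + 2 / (|t| * ε) := by
        rw [norm_mul, norm_mul, hFa, hFb]
        gcongr
        · exact hng b ⟨hab, le_refl b⟩
        · exact hng a ⟨le_refl a, hab⟩
    _ = 4 / (|t| * ε) := by field_simp; ring

lemma lemB {φ ψ ψ' : ℝ → ℝ} (hφ : ∀ x, HasDerivAt φ (ψ x) x)
    (hψd : ∀ x, HasDerivAt ψ (ψ' x) x) (hψ'c : Continuous ψ')
    {a b t ε lam : ℝ} (hab : a ≤ b) (ht : t ≠ 0) (hε : 0 < ε) (hlam : 0 < lam)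
    (hlow : ∀ x ∈ Icc a b, lam ≤ ψ' x) :
    ‖∫ x in a..b, E t (φ x)‖ ≤ 2 * ε / lam + 8 / (|t| * ε) := by
  have ht' : 0 < |t| := abs_pos.mpr ht
  have hφc : Continuous φ := Differentiable.continuous fun x => (hφ x).differentiableAt
  have hψc : Continuous ψ := Differentiable.continuous fun x => (hψd x).differentiableAt
  have hInt : ∀ u v : ℝ, IntervalIntegrable (fun x => E t (φ x)) volume u v :=
    fun u v => (continuous_E hφc).intervalIntegrable u v
  have htriv : ∀ u v : ℝ, u ≤ v → ‖∫ x in u..v, E t (φ x)‖ ≤ v - u := by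
    intro u v huv
    have h1 : ∀ x ∈ Set.uIoc u v, ‖E t (φ x)‖ ≤ 1 := fun x _ => le_of_eq (norm_E t (φ x))
    calc ‖∫ x in u..v, E t (φ x)‖ ≤ 1 * |v - u| :=
          intervalIntegral.norm_integral_le_of_norm_le_const h1
      _ = v - u := by rw [one_mul, abs_of_nonneg (by linarith)]
  have hgrow : ∀ x ∈ Icc a b, ∀ y ∈ Icc a b, x ≤ y → lam * (y - x) ≤ ψ y - ψ x := by
    intro x hx y hy hxy
    apply Convex.mul_sub_le_image_sub_of_le_deriv (convex_Icc a b) hψc.continuousOn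
    · exact fun z _ => (hψd z).differentiableAt.differentiableWithinAt
    · intro z hz
      rw [(hψd z).deriv]
      exact hlow z (interior_subset hz)
    · exact hx
    · exact hy
    · exact hxy
  have hA : ∀ u v : ℝ, a ≤ u → u ≤ v → v ≤ b → (∀ x ∈ Icc u v, ε ≤ |ψ x|) →
      ‖∫ x in u..v, E t (φ x)‖ ≤ 4 / (|t| * ε) := by
    intro u v hau huv hvb hl
    apply lemA hφ hψd hψ'c huv ht hε hl
    left
    intro x hx
    exact le_of_lt (lt_of_lt_of_le hlam (hlow x ⟨le_trans hau hx.1, le_trans hx.2 hvb⟩))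
  have h4pos : (0:ℝ) < 4 / (|t| * ε) := by positivity
  have h2εpos : (0:ℝ) < 2 * ε / lam := by positivity
  have h8pos : (0:ℝ) < 8 / (|t| * ε) := by positivity
  have h44 : 4 / (|t| * ε) + 4 / (|t| * ε) = 8 / (|t| * ε) := by ring
  have habs_neg : ∀ x, ψ x ≤ -ε → ε ≤ |ψ x| := fun x h => le_abs.mpr (Or.inr (by linarith))
  have habs_pos : ∀ x, ε ≤ ψ x → ε ≤ |ψ x| := fun x h => le_abs.mpr (Or.inl h)
  rcases le_or_gt (ψ b) ε with hb | hb
  · rcases le_or_gt (-ε) (ψ a) with ha | ha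
    · -- Case 1 : whole interval short
      have h1 := hgrow a ⟨le_refl a, hab⟩ b ⟨hab, le_refl b⟩ hab
      have h2 : b - a ≤ 2 * ε / lam := by
        rw [le_div_iff₀ hlam]; nlinarith
      calc ‖∫ x in a..b, E t (φ x)‖ ≤ b - a := htriv a b hab
        _ ≤ 2 * ε / lam := h2
        _ ≤ _ := by linarith
    · -- Case 3 : ψ a < -ε, ψ b ≤ ε
      set m := max a (b - 2 * ε / lam) with hm
      have ham : a ≤ m := le_max_left _ _
      have hmb : m ≤ b := max_le hab (by linarith)
      have hsplit := intervalIntegral.integral_add_adjacent_intervals (hInt a m) (hInt m b)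
      have hleft : ∀ x ∈ Icc a m, ε ≤ |ψ x| := by
        intro x hx
        apply habs_neg
        rcases max_cases a (b - 2 * ε / lam) with ⟨hme, hge⟩ | ⟨hme, hlt2⟩
        · have hxa : x = a := le_antisymm (hme ▸ hx.2) hx.1
          rw [hxa]; linarith
        · have hxab : x ∈ Icc a b := ⟨hx.1, le_trans hx.2 hmb⟩
          have h1 := hgrow x hxab b ⟨hab, le_refl b⟩ (le_trans hx.2 hmb)
          have h2 : 2 * ε / lam ≤ b - x := by
            have := hx.2; rw [hm, hme] at this; linarith
          have h3 : lam * (2 * ε / lam) = 2 * ε := by field_simp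
          nlinarith [mul_le_mul_of_nonneg_left h2 (le_of_lt hlam)]
      calc ‖∫ x in a..b, E t (φ x)‖
          = ‖(∫ x in a..m, E t (φ x)) + ∫ x in m..b, E t (φ x)‖ := by rw [hsplit]
        _ ≤ ‖∫ x in a..m, E t (φ x)‖ + ‖∫ x in m..b, E t (φ x)‖ := norm_add_le _ _
        _ ≤ 4 / (|t| * ε) + (b - m) := by
            gcongr
            · exact hA a m (le_refl a) ham hmb hleft
            · exact htriv m b hmb
        _ ≤ 2 * ε / lam + 8 / (|t| * ε) := by
            have : b - m ≤ 2 * ε / lam := by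
              have := le_max_right a (b - 2 * ε / lam); rw [← hm] at this; linarith
            have h8 : 4 / (|t| * ε) ≤ 8 / (|t| * ε) := by gcongr; norm_num
            linarith
  · rcases le_or_gt (-ε) (ψ a) with ha | ha
    · -- Case 2 : -ε ≤ ψ a, ε < ψ b
      set m := min b (a + 2 * ε / lam) with hm
      have ham : a ≤ m := le_min hab (by linarith)
      have hmb : m ≤ b := min_le_left _ _
      have hsplit := intervalIntegral.integral_add_adjacent_intervals (hInt a m) (hInt m b)
      have hright : ∀ x ∈ Icc m b, ε ≤ |ψ x| := by
        intro x hx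
        apply habs_pos
        rcases min_cases b (a + 2 * ε / lam) with ⟨hme, hge⟩ | ⟨hme, hlt2⟩
        · have hxb : x = b := le_antisymm hx.2 (hme ▸ hx.1)
          rw [hxb]; linarith
        · have hxab : x ∈ Icc a b := ⟨le_trans ham hx.1, hx.2⟩
          have h1 := hgrow a ⟨le_refl a, hab⟩ x hxab (le_trans ham hx.1)
          have h2 : 2 * ε / lam ≤ x - a := by
            have := hx.1; rw [hm, hme] at this; linarith
          nlinarith [mul_le_mul_of_nonneg_left h2 (le_of_lt hlam),
            (by field_simp : lam * (2 * ε / lam) = 2 * ε)]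
      calc ‖∫ x in a..b, E t (φ x)‖
          = ‖(∫ x in a..m, E t (φ x)) + ∫ x in m..b, E t (φ x)‖ := by rw [hsplit]
        _ ≤ ‖∫ x in a..m, E t (φ x)‖ + ‖∫ x in m..b, E t (φ x)‖ := norm_add_le _ _
        _ ≤ (m - a) + 4 / (|t| * ε) := by
            gcongr
            · exact htriv a m ham
            · exact hA m b ham hmb (le_refl b) hright
        _ ≤ 2 * ε / lam + 8 / (|t| * ε) := by
            have : m - a ≤ 2 * ε / lam := by
              have := min_le_right b (a + 2 * ε / lam); rw [← hm] at this; linarith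
            have h8 : 4 / (|t| * ε) ≤ 8 / (|t| * ε) := by gcongr; norm_num
            linarith
    · -- Case 4 : ψ a < -ε < ε < ψ b
      obtain ⟨x₀, hx₀ab, hx₀⟩ : ∃ x₀ ∈ Icc a b, ψ x₀ = 0 := by
        have h0 : (0:ℝ) ∈ Icc (ψ a) (ψ b) := ⟨by linarith, by linarith⟩
        obtain ⟨x₀, hmem, heq⟩ := intermediate_value_Icc hab hψc.continuousOn h0
        exact ⟨x₀, hmem, heq⟩
      set c := max a (x₀ - ε / lam) with hc
      set d := min b (x₀ + ε / lam) with hd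
      have hac : a ≤ c := le_max_left _ _
      have hcx : c ≤ x₀ := max_le hx₀ab.1 (by nlinarith [div_pos hε hlam])
      have hxd : x₀ ≤ d := le_min hx₀ab.2 (by nlinarith [div_pos hε hlam])
      have hcd : c ≤ d := le_trans hcx hxd
      have hdb : d ≤ b := min_le_left _ _
      have hcb : c ≤ b := le_trans hcd hdb
      have hsplit1 := intervalIntegral.integral_add_adjacent_intervals (hInt a c) (hInt c b)
      have hsplit2 := intervalIntegral.integral_add_adjacent_intervals (hInt c d) (hInt d b)
      have hleft : ∀ x ∈ Icc a c, ε ≤ |ψ x| := by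
        intro x hx
        apply habs_neg
        rcases max_cases a (x₀ - ε / lam) with ⟨hme, hge⟩ | ⟨hme, hlt2⟩
        · have hxa : x = a := le_antisymm (hme ▸ hx.2) hx.1
          rw [hxa]; linarith
        · have hxab : x ∈ Icc a b := ⟨hx.1, le_trans hx.2 hcb⟩
          have h1 := hgrow x hxab x₀ hx₀ab (le_trans hx.2 hcx)
          have h2 : ε / lam ≤ x₀ - x := by
            have := hx.2; rw [hc, hme] at this; linarith
          nlinarith [mul_le_mul_of_nonneg_left h2 (le_of_lt hlam),
            (by field_simp : lam * (ε / lam) = ε)]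
      have hright : ∀ x ∈ Icc d b, ε ≤ |ψ x| := by
        intro x hx
        apply habs_pos
        rcases min_cases b (x₀ + ε / lam) with ⟨hme, hge⟩ | ⟨hme, hlt2⟩
        · have hxb : x = b := le_antisymm hx.2 (hme ▸ hx.1)
          rw [hxb]; linarith
        · have hxab : x ∈ Icc a b := ⟨le_trans (le_trans hac hcd) hx.1, hx.2⟩
          have h1 := hgrow x₀ hx₀ab x hxab (le_trans hxd hx.1)
          have h2 : ε / lam ≤ x - x₀ := by
            have := hx.1; rw [hd, hme] at this; linarith
          nlinarith [mul_le_mul_of_nonneg_left h2 (le_of_lt hlam),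
            (by field_simp : lam * (ε / lam) = ε)]
      have hmid : d - c ≤ 2 * ε / lam := by
        have h1 := le_max_right a (x₀ - ε / lam); rw [← hc] at h1
        have h2 := min_le_right b (x₀ + ε / lam); rw [← hd] at h2
        have : 2 * ε / lam = ε / lam + ε / lam := by ring
        linarith
      calc ‖∫ x in a..b, E t (φ x)‖
          = ‖(∫ x in a..c, E t (φ x)) + ((∫ x in c..d, E t (φ x)) + ∫ x in d..b, E t (φ x))‖ := by
            rw [hsplit2, hsplit1]
        _ ≤ ‖∫ x in a..c, E t (φ x)‖ + (‖∫ x in c..d, E t (φ x)‖ + ‖∫ x in d..b, E t (φ x)‖) := by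
            refine le_trans (norm_add_le _ _) ?_
            gcongr
            exact norm_add_le _ _
        _ ≤ 4 / (|t| * ε) + ((d - c) + 4 / (|t| * ε)) := by
            gcongr
            · exact hA a c (le_refl a) hac hcb hleft
            · exact htriv c d hcd
            · exact hA d b (le_trans hac hcd) hdb (le_refl b) hright
        _ ≤ 2 * ε / lam + 8 / (|t| * ε) := by linarith

lemma conj_E (t r : ℝ) : (starRingEnd ℂ) (E t r) = E (-t) r := by
  rw [E, E, ← Complex.exp_conj]
  congr 1
  simp [Complex.conj_I]
lemma intervalIntegral_conj (f : ℝ → ℂ) (a b : ℝ) :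
    ∫ x in a..b, (starRingEnd ℂ) (f x) = (starRingEnd ℂ) (∫ x in a..b, f x) := by
  simp [intervalIntegral, integral_conj]

lemma E_neg (t r : ℝ) : E t (-r) = (starRingEnd ℂ) (E t r) := by
  rw [E, E, ← Complex.exp_conj]
  congr 1
  simp [Complex.conj_I]

lemma lemB' {φ ψ ψ' : ℝ → ℝ} (hφ : ∀ x, HasDerivAt φ (ψ x) x)
    (hψd : ∀ x, HasDerivAt ψ (ψ' x) x) (hψ'c : Continuous ψ')
    {a b t ε lam : ℝ} (hab : a ≤ b) (ht : t ≠ 0) (hε : 0 < ε) (hlam : 0 < lam)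
    (hlow : ∀ x ∈ Icc a b, ψ' x ≤ -lam) :
    ‖∫ x in a..b, E t (φ x)‖ ≤ 2 * ε / lam + 8 / (|t| * ε) := by
  have key := lemB (φ := fun x => -φ x) (ψ := fun x => -ψ x) (ψ' := fun x => -ψ' x)
    (fun x => (hφ x).neg) (fun x => (hψd x).neg) hψ'c.neg hab ht hε hlam
    (fun x hx => by have := hlow x hx; show lam ≤ -ψ' x; linarith)
  calc ‖∫ x in a..b, E t (φ x)‖
      = ‖(starRingEnd ℂ) (∫ x in a..b, E t (φ x))‖ := (RCLike.norm_conj _).symm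
    _ = ‖∫ x in a..b, E t (-(φ x))‖ := by
        rw [← intervalIntegral_conj]
        congr 1
        apply intervalIntegral.integral_congr
        intro x _
        exact (E_neg t (φ x)).symm
    _ ≤ 2 * ε / lam + 8 / (|t| * ε) := key

lemma key_pos (t s : ℝ) (ht : 8 ≤ t) :
    ‖∫ x in (0:ℝ)..1, E t (Real.sin x ^ 2 - s * x)‖ ≤ 20 * t ^ (-(1/3) : ℝ) := by
  have ht0 : (0:ℝ) < t := by linarith
  have htne : t ≠ 0 := ne_of_gt ht0
  have habs : |t| = t := abs_of_pos ht0
  set φ : ℝ → ℝ := fun x => Real.sin x ^ 2 - s * x with hφdef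
  set ψ : ℝ → ℝ := fun x => Real.sin (2 * x) - s with hψdef
  set ψ' : ℝ → ℝ := fun x => 2 * Real.cos (2 * x) with hψ'def
  have hφ : ∀ x, HasDerivAt φ (ψ x) x := by
    intro x
    have h1 : HasDerivAt (fun y => Real.sin y ^ 2) (2 * Real.sin x ^ 1 * Real.cos x) x := by
      simpa using (Real.hasDerivAt_sin x).fun_pow 2
    have h2 : HasDerivAt (fun y => s * y) s x := by
      simpa using (hasDerivAt_id x).const_mul s
    have h3 := h1.sub h2
    refine h3.congr_deriv ?_
    rw [hψdef]
    simp only [Real.sin_two_mul]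
    ring
  have hψd : ∀ x, HasDerivAt ψ (ψ' x) x := by
    intro x
    have h1 : HasDerivAt (fun y : ℝ => 2 * y) 2 x := by
      simpa using (hasDerivAt_id x).const_mul 2
    have h2 := (Real.hasDerivAt_sin (2 * x)).comp x h1
    have h3 := h2.sub_const s
    refine h3.congr_deriv ?_
    rw [hψ'def]
    ring
  have hψ'c : Continuous ψ' := by
    rw [hψ'def]; continuity
  set δ : ℝ := t ^ (-(1/3) : ℝ) with hδdef
  set ε : ℝ := t ^ (-(2/3) : ℝ) with hεdef
  have hδpos : 0 < δ := Real.rpow_pos_of_pos ht0 _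
  have hεpos : 0 < ε := Real.rpow_pos_of_pos ht0 _
  have f1 : t * ε = t ^ ((1:ℝ)/3) := by
    rw [hεdef]
    nth_rewrite 1 [← Real.rpow_one t]
    rw [← Real.rpow_add ht0]
    norm_num
  have f2 : δ = (t ^ ((1:ℝ)/3))⁻¹ := by
    rw [hδdef, ← Real.rpow_neg ht0.le]
  have f3 : 8 / (t * ε) = 8 * δ := by
    rw [f1, f2, div_eq_mul_inv]
  have hεδ2 : ε = δ ^ 2 := by
    rw [hδdef, hεdef, ← Real.rpow_natCast (t ^ (-(1/3):ℝ)) 2, ← Real.rpow_mul ht0.le]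
    norm_num
  have hδcube : δ ^ 3 = t⁻¹ := by
    rw [hδdef, ← Real.rpow_natCast (t ^ (-(1/3):ℝ)) 3, ← Real.rpow_mul ht0.le]
    norm_num [Real.rpow_neg_one]
  have hδhalf : δ ≤ 1 / 2 := by
    have h1 : δ ^ 3 ≤ (1/2 : ℝ) ^ 3 := by
      rw [hδcube]
      have : (8:ℝ)⁻¹ = (1/2:ℝ)^3 := by norm_num
      rw [← this]
      exact inv_anti₀ (by norm_num) ht
    exact le_of_pow_le_pow_left₀ (by norm_num) (by norm_num) h1
  have hpi4 : (3:ℝ)/4 < π / 4 := by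
    have := Real.pi_gt_three; linarith
  have hpile : π ≤ 4 := by linarith [Real.pi_le_four]
  set lam : ℝ := 2 * Real.sin (2 * δ) with hlamdef
  have hlam : 0 < lam := by
    rw [hlamdef]
    have h1 : 0 < Real.sin (2 * δ) :=
      Real.sin_pos_of_pos_of_lt_pi (by linarith) (by nlinarith [Real.pi_gt_three])
    linarith
  have hlamge : 8 / π * δ ≤ lam := by
    have h1 : 2 / π * (2 * δ) ≤ Real.sin (2 * δ) :=
      Real.mul_le_sin (by linarith) (by nlinarith [Real.pi_gt_three])
    rw [hlamdef]
    have hπ : (0:ℝ) < π := Real.pi_pos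
    rw [div_mul_eq_mul_div, div_le_iff₀ hπ] at *
    nlinarith
  have houter : 2 * ε / lam + 8 / (|t| * ε) ≤ 9 * δ := by
    have hπ : (0:ℝ) < π := Real.pi_pos
    have h1 : 2 * ε / lam ≤ 2 * ε / (8 / π * δ) := by
      apply div_le_div_of_nonneg_left (by positivity) (by positivity) hlamge
    have h2 : 2 * ε / (8 / π * δ) = π / 4 * δ := by
      rw [hεδ2]
      field_simp
      ring
    have h3 : π / 4 * δ ≤ δ := by nlinarith
    have h4 : 8 / (|t| * ε) = 8 * δ := by rw [habs, ← f3, mul_comm]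
    rw [h4] at *
    linarith [h1, h2.le]
  have hφc : Continuous φ := by rw [hφdef]; continuity
  have hInt : ∀ u v : ℝ, IntervalIntegrable (fun x => E t (φ x)) volume u v :=
    fun u v => (continuous_E hφc).intervalIntegrable u v
  set c₁ : ℝ := π / 4 - δ with hc₁
  set c₂ : ℝ := min 1 (π / 4 + δ) with hc₂
  have h0c₁ : (0:ℝ) ≤ c₁ := by rw [hc₁]; linarith
  have hc₁c₂ : c₁ ≤ c₂ := by
    rw [hc₁, hc₂]
    apply le_min
    · linarith
    · linarith
  have hc₂1 : c₂ ≤ 1 := min_le_left _ _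
  have hs1 := intervalIntegral.integral_add_adjacent_intervals (hInt 0 c₁) (hInt c₁ 1)
  have hs2 := intervalIntegral.integral_add_adjacent_intervals (hInt c₁ c₂) (hInt c₂ 1)
  have hlow1 : ∀ x ∈ Icc 0 c₁, lam ≤ ψ' x := by
    intro x hx
    have hxc : x ≤ π / 4 - δ := by have := hx.2; rw [hc₁] at this; exact this
    have hx0 : 0 ≤ x := hx.1
    simp only [hψ'def, hlamdef]
    have h1 : Real.cos (π / 2 - 2 * δ) ≤ Real.cos (2 * x) := by
      apply Real.cos_le_cos_of_nonneg_of_le_pi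
      · linarith
      · linarith [Real.pi_pos]
      · linarith
    rw [Real.cos_pi_div_two_sub] at h1
    linarith
  have hb1 : ‖∫ x in (0:ℝ)..c₁, E t (φ x)‖ ≤ 9 * δ := by
    refine le_trans (lemB hφ hψd hψ'c h0c₁ htne hεpos hlam hlow1) houter
  have hb2 : ‖∫ x in c₁..c₂, E t (φ x)‖ ≤ 2 * δ := by
    have h1 : ∀ x ∈ Set.uIoc c₁ c₂, ‖E t (φ x)‖ ≤ 1 := fun x _ => le_of_eq (norm_E _ _)
    have h2 : c₂ ≤ π / 4 + δ := min_le_right _ _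
    calc ‖∫ x in c₁..c₂, E t (φ x)‖ ≤ 1 * |c₂ - c₁| :=
          intervalIntegral.norm_integral_le_of_norm_le_const h1
      _ ≤ 2 * δ := by
          rw [one_mul, abs_of_nonneg (by linarith)]
          rw [hc₁]
          linarith
  have hb3 : ‖∫ x in c₂..(1:ℝ), E t (φ x)‖ ≤ 9 * δ := by
    rcases le_or_gt 1 (π / 4 + δ) with hcase | hcase
    · have hce : c₂ = 1 := min_eq_left hcase
      rw [hce, intervalIntegral.integral_same]
      simp
      positivity
    · have hce : c₂ = π / 4 + δ := min_eq_right (le_of_lt hcase)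
      have hlow3 : ∀ x ∈ Icc c₂ 1, ψ' x ≤ -lam := by
        intro x hx
        have hxc : π / 4 + δ ≤ x := by have := hx.1; rw [hce] at this; exact this
        simp only [hψ'def, hlamdef]
        have h1 : Real.cos (2 * x) ≤ Real.cos (π / 2 + 2 * δ) := by
          apply Real.cos_le_cos_of_nonneg_of_le_pi
          · linarith [Real.pi_pos]
          · nlinarith [Real.pi_gt_three, hx.2]
          · linarith
        have h2 : Real.cos (π / 2 + 2 * δ) = -Real.sin (2 * δ) := by
          have h3 := Real.cos_pi_div_two_sub (-(2 * δ))
          rw [sub_neg_eq_add] at h3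
          rw [h3, Real.sin_neg]
        rw [h2] at h1
        linarith
      exact le_trans (lemB' hφ hψd hψ'c hc₂1 htne hεpos hlam hlow3) houter
  have hfinal : ‖∫ x in (0:ℝ)..1, E t (φ x)‖ ≤ 20 * δ := by
    calc ‖∫ x in (0:ℝ)..1, E t (φ x)‖
        = ‖(∫ x in (0:ℝ)..c₁, E t (φ x)) +
            ((∫ x in c₁..c₂, E t (φ x)) + ∫ x in c₂..(1:ℝ), E t (φ x))‖ := by
          rw [hs2, hs1]
      _ ≤ ‖∫ x in (0:ℝ)..c₁, E t (φ x)‖ +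
            (‖∫ x in c₁..c₂, E t (φ x)‖ + ‖∫ x in c₂..(1:ℝ), E t (φ x)‖) := by
          refine le_trans (norm_add_le _ _) ?_
          gcongr
          exact norm_add_le _ _
      _ ≤ 9 * δ + (2 * δ + 9 * δ) := by gcongr
      _ = 20 * δ := by ring
  exact hfinal


/-- Van der Corput estimate for the discrete Schrödinger phase:
    |∫₀¹ e^{−it(sin²x − sx)} dx| ≤ C |t|^{−1/3}, uniformly in s, for |t| ≥ 1. -/
theorem stmt1 :
    ∃ C : ℝ, 0 < C ∧ ∀ t s : ℝ, 1 ≤ |t| →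
      ‖∫ x in (0:ℝ)..1,
          Complex.exp (-Complex.I * (t : ℂ) * ((Real.sin x ^ 2 - s * x : ℝ) : ℂ))‖
        ≤ C * |t| ^ (-(1/3) : ℝ) := by
  refine ⟨20, by norm_num, ?_⟩
  intro t s ht
  have habs0 : (0:ℝ) < |t| := by linarith
  have hEeq : (∫ x in (0:ℝ)..1,
      Complex.exp (-Complex.I * (t : ℂ) * ((Real.sin x ^ 2 - s * x : ℝ) : ℂ)))
      = ∫ x in (0:ℝ)..1, E t (Real.sin x ^ 2 - s * x) := rfl
  rw [hEeq]
  rcases le_or_gt 8 |t| with h8 | h8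
  · rcases le_or_gt 0 t with hpos | hneg
    · have habs : |t| = t := abs_of_nonneg hpos
      rw [habs] at h8 ⊢
      exact key_pos t s h8
    · have habs : |t| = -t := abs_of_neg hneg
      rw [habs] at h8 ⊢
      have h2 : (∫ x in (0:ℝ)..1, E t (Real.sin x ^ 2 - s * x))
          = (starRingEnd ℂ) (∫ x in (0:ℝ)..1, E (-t) (Real.sin x ^ 2 - s * x)) := by
        rw [← intervalIntegral_conj]
        apply intervalIntegral.integral_congr
        intro x _
        show E t (Real.sin x ^ 2 - s * x) = (starRingEnd ℂ) (E (-t) (Real.sin x ^ 2 - s * x))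
        rw [conj_E, neg_neg]
      rw [h2, RCLike.norm_conj]
      exact key_pos (-t) s h8
  · have hb : ‖∫ x in (0:ℝ)..1, E t (Real.sin x ^ 2 - s * x)‖ ≤ 1 := by
      have h1 : ∀ x ∈ Set.uIoc (0:ℝ) 1, ‖E t (Real.sin x ^ 2 - s * x)‖ ≤ 1 :=
        fun x _ => le_of_eq (norm_E _ _)
      calc ‖∫ x in (0:ℝ)..1, E t (Real.sin x ^ 2 - s * x)‖ ≤ 1 * |(1:ℝ) - 0| :=
            intervalIntegral.norm_integral_le_of_norm_le_const h1
        _ = 1 := by norm_num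
    have h13 : |t| ^ ((1:ℝ)/3) ≤ 2 := by
      have e8 : ((8:ℝ)) ^ ((1:ℝ)/3) = 2 := by
        rw [show (8:ℝ) = 2 ^ (3:ℕ) by norm_num, ← Real.rpow_natCast 2 3,
          ← Real.rpow_mul (by norm_num : (0:ℝ) ≤ 2)]
        norm_num
      calc |t| ^ ((1:ℝ)/3) ≤ (8:ℝ) ^ ((1:ℝ)/3) :=
            Real.rpow_le_rpow (abs_nonneg t) (le_of_lt h8) (by norm_num)
        _ = 2 := e8
    have hik : (1:ℝ)/2 ≤ |t| ^ (-(1/3):ℝ) := by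
      rw [show (-(1/3):ℝ) = -((1:ℝ)/3) by norm_num, Real.rpow_neg (abs_nonneg t)]
      have hpos2 : 0 < |t| ^ ((1:ℝ)/3) := Real.rpow_pos_of_pos habs0 _
      have := inv_anti₀ hpos2 h13
      rw [one_div]
      linarith
    linarith
end

section
/- The Van der Corput lemma for second derivatives: if φ : [a,b] → ℝ is C² with |φ''(x)| ≥ λ > 0 for all x ∈ [a,b] and φ'' does not change sign, then |∫ₐᵇ exp(i t φ(x)) dx| ≤ C λ^{−1/2} |t|^{−1/2} for all t ≠ 0, where C is an absolute constant. -/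
open Real MeasureTheory Set Complex

section VdCAux

lemma signConst {a b : ℝ} {ψ : ℝ → ℝ} (hc : ContinuousOn ψ (Icc a b))
    (h0 : ∀ x ∈ Icc a b, ψ x ≠ 0) :
    (∀ x ∈ Icc a b, 0 < ψ x) ∨ (∀ x ∈ Icc a b, ψ x < 0) := by
  by_contra h
  push_neg at h
  obtain ⟨⟨x, hx, hx0⟩, ⟨y, hy, hy0⟩⟩ := h
  replace hx0 : ψ x < 0 := lt_of_le_of_ne hx0 (h0 x hx)
  replace hy0 : 0 < ψ y := lt_of_le_of_ne' hy0 (h0 y hy)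
  rcases le_total x y with hxy | hxy
  · obtain ⟨z, hz, hz0⟩ := intermediate_value_Icc hxy
      (hc.mono (Icc_subset_Icc hx.1 hy.2)) ⟨hx0.le, hy0.le⟩
    exact h0 z (Icc_subset_Icc hx.1 hy.2 hz) hz0
  · obtain ⟨z, hz, hz0⟩ := intermediate_value_Icc' hxy
      (hc.mono (Icc_subset_Icc hy.1 hx.2)) ⟨hx0.le, hy0.le⟩
    exact h0 z (Icc_subset_Icc hy.1 hx.2 hz) hz0

lemma vdc1 {a b t δ : ℝ} {φ ψ χ : ℝ → ℝ} (hab : a ≤ b) (ht : 0 < t) (hδ : 0 < δ)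
    (hφ : ∀ x ∈ Icc a b, HasDerivWithinAt φ (ψ x) (Icc a b) x)
    (hψ : ∀ x ∈ Icc a b, HasDerivWithinAt ψ (χ x) (Icc a b) x)
    (hψc : ContinuousOn ψ (Icc a b)) (hχc : ContinuousOn χ (Icc a b))
    (hχ0 : ∀ x ∈ Icc a b, 0 ≤ χ x)
    (hδψ : ∀ x ∈ Icc a b, δ ≤ |ψ x|) :
    ‖∫ x in a..b, Complex.exp (Complex.I * t * (φ x : ℂ))‖ ≤ 3 / (t * δ) := by
  set s := Icc a b with hs
  have hψ0 : ∀ x ∈ s, ψ x ≠ 0 := fun x hx h =>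
    absurd (hδψ x hx) (by rw [h]; simpa using hδ)
  have hne : ∀ x ∈ s, (Complex.I * t * (ψ x : ℂ)) ≠ 0 := by
    intro x hx
    simp [Complex.ext_iff, ht.ne', hψ0 x hx]
  set e : ℝ → ℂ := fun x => Complex.exp (Complex.I * t * (φ x : ℂ)) with he_def
  set w : ℝ → ℂ := fun x => (Complex.I * t * (ψ x : ℂ))⁻¹ with hw_def
  set w' : ℝ → ℂ := fun x => -(Complex.I * t * (χ x : ℂ)) / (Complex.I * t * (ψ x : ℂ)) ^ 2
    with hw'_def
  have hnorm_e : ∀ x, ‖e x‖ = 1 := by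
    intro x
    have : Complex.I * t * (φ x : ℂ) = ((t * φ x : ℝ) : ℂ) * Complex.I := by
      push_cast; ring
    rw [he_def]; simp only [this, Complex.norm_exp_ofReal_mul_I]
  have hnorm_w : ∀ x ∈ s, ‖w x‖ ≤ (t * δ)⁻¹ := by
    intro x hx
    rw [hw_def]
    simp only [norm_inv, norm_mul, Complex.norm_I, Complex.norm_real, Real.norm_eq_abs,
      one_mul]
    rw [abs_of_pos ht]
    apply inv_anti₀ (by positivity)
    exact mul_le_mul_of_nonneg_left (hδψ x hx) ht.le
  -- derivatives
  have heD : ∀ x ∈ s, HasDerivWithinAt e (Complex.I * t * (ψ x : ℂ) * e x) s x := by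
    intro x hx
    have h1 : HasDerivWithinAt (fun y => (φ y : ℂ)) ((ψ x : ℂ)) s x :=
      Complex.ofRealCLM.hasFDerivAt.comp_hasDerivWithinAt x (hφ x hx)
    have h2 : HasDerivWithinAt (fun y => Complex.I * t * (φ y : ℂ))
        (Complex.I * t * (ψ x : ℂ)) s x := h1.const_mul _
    simpa [he_def, mul_comm] using h2.cexp
  have hwD : ∀ x ∈ s, HasDerivWithinAt w (w' x) s x := by
    intro x hx
    have h2 : HasDerivWithinAt (fun y => Complex.I * t * (ψ y : ℂ))
        (Complex.I * t * (χ x : ℂ)) s x :=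
      (Complex.ofRealCLM.hasFDerivAt.comp_hasDerivWithinAt x (hψ x hx)).const_mul _
    have h3 := (hasDerivWithinAt_const x s (1 : ℂ)).div h2 (hne x hx)
    simp only [zero_mul, one_mul, zero_sub] at h3
    simpa [hw_def, hw'_def, one_div, neg_div, Pi.div_def] using h3
  -- continuity
  have hφc : ContinuousOn φ s := fun x hx => (hφ x hx).continuousWithinAt
  have hec : ContinuousOn e s := by
    apply Complex.continuous_exp.comp_continuousOn
    exact (continuousOn_const.mul (Complex.continuous_ofReal.comp_continuousOn hφc))
  have hwc : ContinuousOn w s := by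
    apply ContinuousOn.inv₀
    · exact continuousOn_const.mul (Complex.continuous_ofReal.comp_continuousOn hψc)
    · exact hne
  have hw'c : ContinuousOn w' s := by
    apply ContinuousOn.div
    · exact (continuousOn_const.mul (Complex.continuous_ofReal.comp_continuousOn hχc)).neg
    · exact (continuousOn_const.mul (Complex.continuous_ofReal.comp_continuousOn hψc)).pow 2
    · exact fun x hx => pow_ne_zero 2 (hne x hx)
  -- integrability
  have hInt_e : IntervalIntegrable e volume a b :=
    (hec.mono (by rw [uIcc_of_le hab])).intervalIntegrable
  have hInt_ew' : IntervalIntegrable (fun x => e x * w' x) volume a b :=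
    ((hec.mul hw'c).mono (by rw [uIcc_of_le hab])).intervalIntegrable
  -- FTC for e * w
  have key : ∫ x in a..b, (e x + e x * w' x) = e b * w b - e a * w a := by
    apply intervalIntegral.integral_eq_sub_of_hasDeriv_right_of_le hab
      (hec.mul hwc)
    · intro x hx
      have hxs : x ∈ s := Ioo_subset_Icc_self hx
      have hd := ((heD x hxs).mul (hwD x hxs)).hasDerivAt
        (Icc_mem_nhds hx.1 hx.2)
      have hval : Complex.I * t * (ψ x : ℂ) * e x * w x + e x * w' x
          = e x + e x * w' x := by
        congr 1
        rw [hw_def, ← div_eq_mul_inv, div_eq_iff (hne x hxs)]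
        ring
      rw [← hval]
      exact hd.hasDerivWithinAt
    · exact hInt_e.add hInt_ew'
  have split : ∫ x in a..b, e x = (e b * w b - e a * w a) - ∫ x in a..b, e x * w' x := by
    refine eq_sub_of_add_eq ?_
    rw [← intervalIntegral.integral_add hInt_e hInt_ew']
    exact key
  have ha_mem : a ∈ s := by rw [hs]; exact left_mem_Icc.mpr hab
  have hb_mem : b ∈ s := by rw [hs]; exact right_mem_Icc.mpr hab
  -- pointwise norm of e * w'
  have hnorm_ew' : ∀ x ∈ s, ‖e x * w' x‖ = χ x / (t * ψ x ^ 2) := by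
    intro x hx
    have hψx := hψ0 x hx
    have hsq : (0:ℝ) < ψ x ^ 2 := pow_two_pos_of_ne_zero hψx
    rw [norm_mul, hnorm_e, one_mul, hw'_def]
    simp only [norm_div, norm_neg, norm_pow, norm_mul, Complex.norm_I,
      one_mul, Complex.norm_real, Real.norm_eq_abs]
    rw [_root_.abs_of_pos ht, _root_.abs_of_nonneg (hχ0 x hx), mul_pow, _root_.sq_abs,
      div_eq_div_iff (by positivity) (by positivity)]
    ring
  -- FTC for the variation integral
  have hvar : ∫ x in a..b, χ x / (t * ψ x ^ 2) = (ψ a)⁻¹ / t - (ψ b)⁻¹ / t := by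
    have : ∫ x in a..b, χ x / (t * ψ x ^ 2)
        = (-(ψ b)⁻¹ / t) - (-(ψ a)⁻¹ / t) := by
      apply intervalIntegral.integral_eq_sub_of_hasDeriv_right_of_le hab
      · exact ((hψc.inv₀ hψ0).neg.div_const t)
      · intro x hx
        have hxs : x ∈ s := Ioo_subset_Icc_self hx
        have h1 : HasDerivWithinAt (fun y => -(ψ y)⁻¹ / t)
            (χ x / (t * ψ x ^ 2)) s x := by
          have h2 := (((hψ x hxs).inv (hψ0 x hxs)).neg).div_const t
          have hψx := hψ0 x hxs
          have heq : -(-χ x / ψ x ^ 2) / t = χ x / (t * ψ x ^ 2) := by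
            field_simp
          rwa [heq] at h2
        exact (h1.hasDerivAt (Icc_mem_nhds hx.1 hx.2)).hasDerivWithinAt
      · apply ContinuousOn.intervalIntegrable
        rw [uIcc_of_le hab]
        exact hχc.div (continuousOn_const.mul (hψc.pow 2))
          (fun x hx => by have := hψ0 x hx; positivity)
    rw [this]; ring
  -- bound the variation term
  have key2 : (ψ a)⁻¹ - (ψ b)⁻¹ ≤ δ⁻¹ := by
    rcases signConst hψc hψ0 with hpos | hneg
    · have ha' : δ ≤ ψ a := by
        have := hδψ a ha_mem; rwa [abs_of_pos (hpos a ha_mem)] at this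
      have h1 : (ψ a)⁻¹ ≤ δ⁻¹ := inv_anti₀ hδ ha'
      have h2 : 0 < (ψ b)⁻¹ := inv_pos.mpr (hpos b hb_mem)
      linarith
    · have hb' : δ ≤ -ψ b := by
        have := hδψ b hb_mem; rwa [abs_of_neg (hneg b hb_mem)] at this
      have h1 : (-ψ b)⁻¹ ≤ δ⁻¹ := inv_anti₀ hδ hb'
      rw [inv_neg] at h1
      have h2 : (ψ a)⁻¹ ≤ 0 := inv_nonpos.mpr (hneg a ha_mem).le
      linarith
  have hvar_le : (ψ a)⁻¹ / t - (ψ b)⁻¹ / t ≤ 1 / (t * δ) := by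
    rw [div_sub_div_same]
    calc ((ψ a)⁻¹ - (ψ b)⁻¹) / t ≤ δ⁻¹ / t := by gcongr
      _ = 1 / (t * δ) := by rw [div_eq_mul_inv, one_div, mul_inv]; ring
  have hIbound : ‖∫ x in a..b, e x * w' x‖ ≤ 1 / (t * δ) := by
    calc ‖∫ x in a..b, e x * w' x‖ ≤ ∫ x in a..b, ‖e x * w' x‖ :=
          intervalIntegral.norm_integral_le_integral_norm hab
      _ = ∫ x in a..b, χ x / (t * ψ x ^ 2) := by
          apply intervalIntegral.integral_congr
          rw [uIcc_of_le hab]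
          intro x hx
          exact hnorm_ew' x hx
      _ = (ψ a)⁻¹ / t - (ψ b)⁻¹ / t := hvar
      _ ≤ 1 / (t * δ) := hvar_le
  calc ‖∫ x in a..b, e x‖ = ‖e b * w b - e a * w a - ∫ x in a..b, e x * w' x‖ := by
        rw [split]
    _ ≤ ‖e b * w b - e a * w a‖ + ‖∫ x in a..b, e x * w' x‖ := norm_sub_le _ _
    _ ≤ (‖e b * w b‖ + ‖e a * w a‖) + ‖∫ x in a..b, e x * w' x‖ :=
        add_le_add_left (norm_sub_le _ _) _
    _ ≤ ((t * δ)⁻¹ + (t * δ)⁻¹) + 1 / (t * δ) := by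
        refine add_le_add (add_le_add ?_ ?_) hIbound
        · rw [norm_mul, hnorm_e, one_mul]; exact hnorm_w b hb_mem
        · rw [norm_mul, hnorm_e, one_mul]; exact hnorm_w a ha_mem
    _ = 3 / (t * δ) := by rw [one_div]; ring

lemma vdc2 {a b t lam : ℝ} {φ ψ χ : ℝ → ℝ} (hab : a ≤ b) (ht : 0 < t) (hlam : 0 < lam)
    (hφ : ∀ x ∈ Icc a b, HasDerivWithinAt φ (ψ x) (Icc a b) x)
    (hψ : ∀ x ∈ Icc a b, HasDerivWithinAt ψ (χ x) (Icc a b) x)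
    (hψc : ContinuousOn ψ (Icc a b)) (hχc : ContinuousOn χ (Icc a b))
    (hχ : ∀ x ∈ Icc a b, lam ≤ χ x) :
    ‖∫ x in a..b, Complex.exp (Complex.I * t * (φ x : ℂ))‖ ≤ 8 / Real.sqrt (lam * t) := by
  set δ := Real.sqrt (lam / t) with hδ_def
  have hδ : 0 < δ := Real.sqrt_pos.mpr (div_pos hlam ht)
  -- quantitative monotonicity of ψ
  have hquant : ∀ x ∈ Icc a b, ∀ y ∈ Icc a b, x ≤ y → lam * (y - x) ≤ ψ y - ψ x := by
    have hD : ∀ x ∈ Ioo a b, HasDerivAt (fun y => ψ y - lam * y) (χ x - lam) x := by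
      intro x hx
      have h1 := (hψ x (Ioo_subset_Icc_self hx)).hasDerivAt (Icc_mem_nhds hx.1 hx.2)
      have h2 : HasDerivAt (fun y : ℝ => lam * y) lam x := by
        simpa using (hasDerivAt_id x).const_mul lam
      exact h1.sub h2
    have hm : MonotoneOn (fun x => ψ x - lam * x) (Icc a b) := by
      apply monotoneOn_of_deriv_nonneg (convex_Icc a b)
      · exact hψc.sub (continuousOn_const.mul continuousOn_id)
      · intro x hx
        rw [interior_Icc] at hx
        exact (hD x hx).differentiableAt.differentiableWithinAt
      · intro x hx
        rw [interior_Icc] at hx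
        rw [(hD x hx).deriv]
        have := hχ x (Ioo_subset_Icc_self hx)
        linarith
    intro x hx y hy hxy
    have := hm hx hy hxy
    simp only at this
    linarith
  have hmono : ∀ x ∈ Icc a b, ∀ y ∈ Icc a b, x ≤ y → ψ x ≤ ψ y := by
    intro x hx y hy hxy
    have := hquant x hx y hy hxy
    nlinarith
  -- the splitting points
  set S := Icc a b ∩ ψ ⁻¹' (Iic (-δ)) with hS_def
  set T := Icc a b ∩ ψ ⁻¹' (Ici δ) with hT_def
  have hSsub : S ⊆ Icc a b := inter_subset_left
  have hTsub : T ⊆ Icc a b := inter_subset_left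
  have hSbdd : BddAbove (insert a S) := by
    refine ⟨b, ?_⟩
    rintro x (rfl | hx)
    · exact hab
    · exact (hSsub hx).2
  have hTbdd : BddBelow (insert b T) := by
    refine ⟨a, ?_⟩
    rintro x (rfl | hx)
    · exact hab
    · exact (hTsub hx).1
  set c := sSup (insert a S) with hc_def
  set d := sInf (insert b T) with hd_def
  have hac : a ≤ c := le_csSup hSbdd (mem_insert a S)
  have hcb : c ≤ b := by
    apply csSup_le (insert_nonempty _ _)
    rintro x (rfl | hx)
    exacts [hab, (hSsub hx).2]
  have had : a ≤ d := by
    apply le_csInf (insert_nonempty _ _)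
    rintro x (rfl | hx)
    exacts [hab, (hTsub hx).1]
  have hdb : d ≤ b := csInf_le hTbdd (mem_insert b T)
  have hcd : c ≤ d := by
    apply csSup_le (insert_nonempty _ _)
    rintro x (rfl | hxS)
    · exact had
    · apply le_csInf (insert_nonempty _ _)
      rintro y (rfl | hyT)
      · exact (hSsub hxS).2
      · by_contra h
        push_neg at h
        have hq := hquant y (hTsub hyT) x (hSsub hxS) h.le
        have h1 : ψ x ≤ -δ := hxS.2
        have h2 : δ ≤ ψ y := hyT.2
        nlinarith
  -- membership of c in S when a < c
  have hSclosed : IsClosed S := hψc.preimage_isClosed_of_isClosed isClosed_Icc isClosed_Iic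
  have hTclosed : IsClosed T := hψc.preimage_isClosed_of_isClosed isClosed_Icc isClosed_Ici
  have hcS : a < c → ψ c ≤ -δ := by
    intro hlt
    rcases S.eq_empty_or_nonempty with hemp | hne
    · rw [hc_def, hemp, insert_empty_eq, csSup_singleton] at hlt
      exact absurd hlt (lt_irrefl a)
    · have hceq : c = a ⊔ sSup S := by rw [hc_def, csSup_insert (hSbdd.mono (subset_insert _ _)) hne]
      have hmem : sSup S ∈ S := hSclosed.csSup_mem hne (hSbdd.mono (subset_insert _ _))
      have : c = sSup S := by
        rcases le_total a (sSup S) with h | h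
        · rw [hceq, sup_eq_right.mpr h]
        · rw [hceq, sup_eq_left.mpr h] at hlt ⊢
          exact absurd hlt (lt_irrefl a)
      rw [this]
      exact hmem.2
  have hdT : d < b → δ ≤ ψ d := by
    intro hlt
    rcases T.eq_empty_or_nonempty with hemp | hne
    · rw [hd_def, hemp, insert_empty_eq, csInf_singleton] at hlt
      exact absurd hlt (lt_irrefl b)
    · have hdeq : d = b ⊓ sInf T := by rw [hd_def, csInf_insert (hTbdd.mono (subset_insert _ _)) hne]
      have hmem : sInf T ∈ T := hTclosed.csInf_mem hne (hTbdd.mono (subset_insert _ _))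
      have : d = sInf T := by
        rcases le_total (sInf T) b with h | h
        · rw [hdeq, inf_eq_right.mpr h]
        · rw [hdeq, inf_eq_left.mpr h] at hlt ⊢
          exact absurd hlt (lt_irrefl b)
      rw [this]
      exact hmem.2
  have hc_mem : c ∈ Icc a b := ⟨hac, hcb⟩
  have hd_mem : d ∈ Icc a b := ⟨had, hdb⟩
  -- middle length bound
  have hmid : d - c ≤ 2 * δ / lam := by
    rcases eq_or_lt_of_le hcd with heq | hlt
    · rw [← heq]; simp; positivity
    · apply le_of_forall_pos_le_add
      intro ε hε
      set η := min (ε / 2) ((d - c) / 2) with hη_def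
      have hη : 0 < η := lt_min (by linarith) (by linarith)
      have hη2 : 2 * η ≤ d - c := by
        have := min_le_right (ε / 2) ((d - c) / 2)
        rw [← hη_def] at this
        linarith
      have hηε : 2 * η ≤ ε := by
        have := min_le_left (ε / 2) ((d - c) / 2)
        rw [← hη_def] at this
        linarith
      set x := c + η
      set y := d - η
      have hx_mem : x ∈ Icc a b := ⟨by simp only [x]; linarith, by simp only [x]; linarith⟩
      have hy_mem : y ∈ Icc a b := ⟨by simp only [y]; linarith, by simp only [y]; linarith⟩
      have hxy : x ≤ y := by simp only [x, y]; linarith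
      have hxS : x ∉ S := by
        intro hmem
        have : x ≤ c := le_csSup hSbdd (mem_insert_of_mem _ hmem)
        simp only [x] at this
        linarith
      have hyT : y ∉ T := by
        intro hmem
        have : d ≤ y := csInf_le hTbdd (mem_insert_of_mem _ hmem)
        simp only [y] at this
        linarith
      have hψx : -δ < ψ x := by
        by_contra h
        push_neg at h
        exact hxS ⟨hx_mem, h⟩
      have hψy : ψ y < δ := by
        by_contra h
        push_neg at h
        exact hyT ⟨hy_mem, h⟩
      have hq := hquant x hx_mem y hy_mem hxy
      have h1 : lam * (d - c - 2 * η) < 2 * δ := by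
        have : y - x = d - c - 2 * η := by simp only [x, y]; ring
        rw [this] at hq
        linarith
      have h2 : d - c - 2 * η < 2 * δ / lam := by
        rw [lt_div_iff₀ hlam]
        linarith [mul_comm lam (d - c - 2 * η)]
      linarith
  -- continuity & integrability of the integrand
  set f : ℝ → ℂ := fun x => Complex.exp (Complex.I * t * (φ x : ℂ)) with hf_def
  have hφc : ContinuousOn φ (Icc a b) := fun x hx => (hφ x hx).continuousWithinAt
  have hfc : ContinuousOn f (Icc a b) := by
    apply Complex.continuous_exp.comp_continuousOn
    exact continuousOn_const.mul (Complex.continuous_ofReal.comp_continuousOn hφc)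
  have hInt : ∀ u v : ℝ, u ∈ Icc a b → v ∈ Icc a b → IntervalIntegrable f volume u v := by
    intro u v hu hv
    apply ContinuousOn.intervalIntegrable
    apply hfc.mono
    intro z hz
    rcases le_total u v with h | h
    · rw [uIcc_of_le h] at hz
      exact ⟨le_trans hu.1 hz.1, le_trans hz.2 hv.2⟩
    · rw [uIcc_of_ge h] at hz
      exact ⟨le_trans hv.1 hz.1, le_trans hz.2 hu.2⟩
  have ha_mem : a ∈ Icc a b := left_mem_Icc.mpr hab
  have hb_mem : b ∈ Icc a b := right_mem_Icc.mpr hab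
  have hsplit : (∫ x in a..b, f x)
      = (∫ x in a..c, f x) + (∫ x in c..d, f x) + (∫ x in d..b, f x) := by
    rw [intervalIntegral.integral_add_adjacent_intervals (hInt a c ha_mem hc_mem)
      (hInt c d hc_mem hd_mem)]
    rw [intervalIntegral.integral_add_adjacent_intervals (hInt a d ha_mem hd_mem)
      (hInt d b hd_mem hb_mem)]
  -- left piece
  have hleft : ‖∫ x in a..c, f x‖ ≤ 3 / (t * δ) := by
    rcases eq_or_lt_of_le hac with heq | hlt
    · rw [← heq, intervalIntegral.integral_same, norm_zero]
      positivity
    · have hsub : Icc a c ⊆ Icc a b := Icc_subset_Icc le_rfl hcb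
      apply vdc1 hac ht hδ
        (fun x hx => (hφ x (hsub hx)).mono hsub)
        (fun x hx => (hψ x (hsub hx)).mono hsub)
        (hψc.mono hsub) (hχc.mono hsub)
        (fun x hx => le_trans hlam.le (hχ x (hsub hx)))
      intro x hx
      have h1 : ψ x ≤ ψ c := hmono x (hsub hx) c hc_mem hx.2
      have h2 : ψ c ≤ -δ := hcS hlt
      rw [abs_of_neg (by linarith)]
      linarith
  -- right piece
  have hright : ‖∫ x in d..b, f x‖ ≤ 3 / (t * δ) := by
    rcases eq_or_lt_of_le hdb with heq | hlt
    · rw [heq, intervalIntegral.integral_same, norm_zero]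
      positivity
    · have hsub : Icc d b ⊆ Icc a b := Icc_subset_Icc had le_rfl
      apply vdc1 hdb ht hδ
        (fun x hx => (hφ x (hsub hx)).mono hsub)
        (fun x hx => (hψ x (hsub hx)).mono hsub)
        (hψc.mono hsub) (hχc.mono hsub)
        (fun x hx => le_trans hlam.le (hχ x (hsub hx)))
      intro x hx
      have h1 : ψ d ≤ ψ x := hmono d hd_mem x (hsub hx) hx.1
      have h2 : δ ≤ ψ d := hdT hlt
      rw [abs_of_pos (by linarith)]
      linarith
  -- middle piece
  have hmiddle : ‖∫ x in c..d, f x‖ ≤ 2 * δ / lam := by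
    have h1 : ‖∫ x in c..d, f x‖ ≤ 1 * |d - c| := by
      apply intervalIntegral.norm_integral_le_of_norm_le_const
      intro x hx
      rw [hf_def]
      have : Complex.I * t * (φ x : ℂ) = ((t * φ x : ℝ) : ℂ) * Complex.I := by
        push_cast; ring
      simp only [this, Complex.norm_exp_ofReal_mul_I, le_refl]
    rw [one_mul, _root_.abs_of_nonneg (by linarith)] at h1
    linarith
  -- arithmetic
  have hsq1 : t * δ = Real.sqrt (lam * t) := by
    rw [hδ_def, show lam * t = (lam / t) * t ^ 2 by field_simp,
      Real.sqrt_mul (div_nonneg hlam.le ht.le), Real.sqrt_sq ht.le]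
    ring
  have hsq2 : Real.sqrt (lam * t) * δ = lam := by
    rw [hδ_def, ← Real.sqrt_mul (mul_nonneg hlam.le ht.le),
      show lam * t * (lam / t) = lam ^ 2 by field_simp, Real.sqrt_sq hlam.le]
  have hsqpos : 0 < Real.sqrt (lam * t) := Real.sqrt_pos.mpr (by positivity)
  calc ‖∫ x in a..b, f x‖
      ≤ ‖∫ x in a..c, f x‖ + ‖∫ x in c..d, f x‖ + ‖∫ x in d..b, f x‖ := by
        rw [hsplit]
        exact le_trans (norm_add_le _ _) (add_le_add_left (norm_add_le _ _) _)
    _ ≤ 3 / (t * δ) + 2 * δ / lam + 3 / (t * δ) := by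
        exact add_le_add (add_le_add hleft hmiddle) hright
    _ = 8 / Real.sqrt (lam * t) := by
        have h3 : 2 * δ / lam = 2 / Real.sqrt (lam * t) := by
          rw [div_eq_div_iff hlam.ne' hsqpos.ne']
          linear_combination 2 * hsq2
        rw [hsq1, h3]
        rw [← add_div, ← add_div]
        norm_num

lemma conj_norm_eq {a b t : ℝ} {φ : ℝ → ℝ} :
    ‖∫ x in a..b, Complex.exp (Complex.I * t * (φ x : ℂ))‖
      = ‖∫ x in a..b, Complex.exp (Complex.I * ((-t : ℝ) : ℂ) * (φ x : ℂ))‖ := by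
  have h : ∀ u v : ℝ, (∫ x in Set.Ioc u v, Complex.exp (Complex.I * ((-t : ℝ) : ℂ) * (φ x : ℂ)))
      = (starRingEnd ℂ) (∫ x in Set.Ioc u v, Complex.exp (Complex.I * (t : ℝ) * (φ x : ℂ))) := by
    intro u v
    rw [← integral_conj]
    congr 1
    funext x
    rw [← Complex.exp_conj]
    congr 1
    simp [Complex.ext_iff]
  rw [intervalIntegral, intervalIntegral, h, h, ← map_sub]
  rw [RCLike.norm_conj]

lemma vdc2abs {a b t lam : ℝ} {φ ψ χ : ℝ → ℝ} (hab : a ≤ b) (ht : t ≠ 0) (hlam : 0 < lam)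
    (hφ : ∀ x ∈ Icc a b, HasDerivWithinAt φ (ψ x) (Icc a b) x)
    (hψ : ∀ x ∈ Icc a b, HasDerivWithinAt ψ (χ x) (Icc a b) x)
    (hψc : ContinuousOn ψ (Icc a b)) (hχc : ContinuousOn χ (Icc a b))
    (hχ : ∀ x ∈ Icc a b, lam ≤ χ x) :
    ‖∫ x in a..b, Complex.exp (Complex.I * t * (φ x : ℂ))‖ ≤ 8 / Real.sqrt (lam * |t|) := by
  rcases ht.lt_or_gt with htneg | htpos
  · rw [conj_norm_eq, abs_of_neg htneg]
    exact vdc2 hab (by linarith) hlam hφ hψ hψc hχc hχ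
  · rw [abs_of_pos htpos]
    exact vdc2 hab htpos hlam hφ hψ hψc hχc hχ

end VdCAux


/-- Van der Corput lemma, second-derivative case: there is an absolute constant C
    such that if φ is C² on [a,b], |φ''| ≥ λ > 0 on [a,b] and φ'' does not change sign,
    then |∫ₐᵇ e^{itφ(x)} dx| ≤ C λ^{−1/2} |t|^{−1/2} for all t ≠ 0. -/
theorem stmt2 :
    ∃ C : ℝ, 0 < C ∧
      ∀ (a b : ℝ) (φ : ℝ → ℝ) (lam t : ℝ), a ≤ b → 0 < lam → t ≠ 0 →
        ContDiffOn ℝ 2 φ (Icc a b) →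
        (∀ x ∈ Icc a b, lam ≤ |iteratedDerivWithin 2 φ (Icc a b) x|) →
        ((∀ x ∈ Icc a b, 0 ≤ iteratedDerivWithin 2 φ (Icc a b) x) ∨
         (∀ x ∈ Icc a b, iteratedDerivWithin 2 φ (Icc a b) x ≤ 0)) →
        ‖∫ x in a..b, Complex.exp (Complex.I * (t : ℂ) * ((φ x : ℝ) : ℂ))‖
          ≤ C * lam ^ (-(1/2) : ℝ) * |t| ^ (-(1/2) : ℝ) := by
  refine ⟨8, by norm_num, ?_⟩
  intro a b φ lam t hab hlam ht hC2 hlow hsign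
  have hrpow : 8 / Real.sqrt (lam * |t|) = 8 * lam ^ (-(1/2) : ℝ) * |t| ^ (-(1/2) : ℝ) := by
    rw [Real.sqrt_mul hlam.le, Real.rpow_neg hlam.le, Real.rpow_neg (abs_nonneg t),
      ← Real.sqrt_eq_rpow, ← Real.sqrt_eq_rpow, div_eq_mul_inv, mul_inv]
    ring
  rcases eq_or_lt_of_le hab with heq | hlt
  · subst heq
    rw [intervalIntegral.integral_same, norm_zero]
    positivity
  · have hud : UniqueDiffOn ℝ (Icc a b) := uniqueDiffOn_Icc hlt
    set ψ := derivWithin φ (Icc a b) with hψ_def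
    set χ := iteratedDerivWithin 2 φ (Icc a b) with hχ_def
    have hφd : ∀ x ∈ Icc a b, HasDerivWithinAt φ (ψ x) (Icc a b) x := fun x hx =>
      ((hC2.differentiableOn (by norm_num)) x hx).hasDerivWithinAt
    have hψ1 : ContDiffOn ℝ 1 ψ (Icc a b) := hC2.derivWithin hud (by norm_num)
    have hψc : ContinuousOn ψ (Icc a b) := hψ1.continuousOn
    have hχeq : ∀ x ∈ Icc a b, χ x = derivWithin ψ (Icc a b) x := by
      intro x hx
      rw [hχ_def, iteratedDerivWithin_succ]
      apply derivWithin_congr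
      · intro y hy
        rw [iteratedDerivWithin_one]
      · rw [iteratedDerivWithin_one]
    have hψd : ∀ x ∈ Icc a b, HasDerivWithinAt ψ (χ x) (Icc a b) x := by
      intro x hx
      rw [hχeq x hx]
      exact ((hψ1.differentiableOn (by norm_num)) x hx).hasDerivWithinAt
    have hχc : ContinuousOn χ (Icc a b) :=
      hC2.continuousOn_iteratedDerivWithin (by norm_num) hud
    rw [← hrpow]
    rcases hsign with hpos | hneg
    · have hχlam : ∀ x ∈ Icc a b, lam ≤ χ x := fun x hx => by
        have := hlow x hx
        rwa [_root_.abs_of_nonneg (hpos x hx)] at this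
      exact vdc2abs hab ht hlam hφd hψd hψc hχc hχlam
    · have hχlam : ∀ x ∈ Icc a b, lam ≤ -χ x := fun x hx => by
        have := hlow x hx
        rwa [abs_of_nonpos (hneg x hx)] at this
      have h2 := vdc2abs (t := -t) (φ := fun x => -φ x) (ψ := fun x => -ψ x)
        (χ := fun x => -χ x) hab (neg_ne_zero.mpr ht) hlam
        (fun x hx => (hφd x hx).neg) (fun x hx => (hψd x hx).neg)
        hψc.neg hχc.neg hχlam
      rw [abs_neg] at h2
      refine le_trans (le_of_eq ?_) h2
      congr 1
      apply intervalIntegral.integral_congr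
      intro x _
      have harg : Complex.I * (t : ℂ) * ((φ x : ℝ) : ℂ)
          = Complex.I * ((-t : ℝ) : ℂ) * ((-φ x : ℝ) : ℂ) := by
        push_cast
        ring
      simp only []
      rw [harg]
end

section
/- The Van der Corput lemma for third derivatives: if φ : [a,b] → ℝ is C³ with |φ'''(x)| ≥ λ > 0 for all x ∈ [a,b], then |∫ₐᵇ exp(i t φ(x)) dx| ≤ C λ^{−1/3} |t|^{−1/3} for all t ≠ 0, where C is an absolute constant. -/
open Real MeasureTheory Set

lemma vdc_ofReal {f : ℝ → ℝ} {f' x : ℝ} {s : Set ℝ} (hf : HasDerivWithinAt f f' s x) :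
    HasDerivWithinAt (fun x => ((f x : ℝ) : ℂ)) (f' : ℂ) s x := by
  exact hf.ofReal_comp

lemma vdc_slope {a b lam : ℝ} {g g' : ℝ → ℝ}
    (hd : ∀ x ∈ Icc a b, HasDerivWithinAt g (g' x) (Icc a b) x)
    (hlow : ∀ x ∈ Icc a b, lam ≤ g' x) :
    ∀ x ∈ Icc a b, ∀ y ∈ Icc a b, x ≤ y → lam * (y - x) ≤ g y - g x := by
  have hmono : MonotoneOn (fun x => g x - lam * x) (Icc a b) := by
    apply monotoneOn_of_hasDerivWithinAt_nonneg (f' := fun x => g' x - lam) (convex_Icc a b)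
    · intro x hx
      exact ((hd x hx).sub (((hasDerivAt_id x).const_mul lam).hasDerivWithinAt.congr_deriv
        (mul_one lam))).continuousWithinAt
    · intro x hx
      have hx' : x ∈ Icc a b := by
        rw [interior_Icc] at hx; exact Ioo_subset_Icc_self hx
      exact ((hd x hx').sub
        (((hasDerivAt_id x).const_mul lam).hasDerivWithinAt.congr_deriv
          (mul_one lam))).mono interior_subset
    · intro x hx
      rw [interior_Icc] at hx
      exact sub_nonneg.2 (hlow x (Ioo_subset_Icc_self hx))
  intro x hx y hy hxy
  have := hmono hx hy hxy
  simp only at this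
  linarith

lemma vdc_sign {a b lam : ℝ} {g : ℝ → ℝ} (hg : ContinuousOn g (Icc a b))
    (hlam : 0 < lam) (h : ∀ x ∈ Icc a b, lam ≤ |g x|) :
    (∀ x ∈ Icc a b, lam ≤ g x) ∨ (∀ x ∈ Icc a b, g x ≤ -lam) := by
  by_contra hcon
  push_neg at hcon
  obtain ⟨⟨x, hx, hgx⟩, ⟨y, hy, hgy⟩⟩ := hcon
  have hx' : g x ≤ -lam := by
    rcases le_abs.mp (h x hx) with h1 | h1
    · linarith
    · linarith
  have hy' : lam ≤ g y := by
    rcases le_abs.mp (h y hy) with h1 | h1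
    · exact h1
    · linarith
  have hsub : uIcc x y ⊆ Icc a b := uIcc_subset_Icc hx hy
  have h0 : (0 : ℝ) ∈ uIcc (g x) (g y) := by
    rw [mem_uIcc]
    left
    constructor <;> linarith
  obtain ⟨z, hz, hgz⟩ := intermediate_value_uIcc (hg.mono hsub) h0
  have := h z (hsub hz)
  rw [hgz] at this
  simp at this
  linarith



lemma vdc_norm_exp (t φx : ℝ) : ‖Complex.exp (Complex.I * t * φx)‖ = 1 := by
  rw [Complex.norm_exp]
  simp [Complex.mul_re]

lemma vdc_key1 {a b t mu : ℝ} {φ φ' φ'' : ℝ → ℝ} (hab : a ≤ b) (ht : t ≠ 0) (hmu : 0 < mu)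
    (hd1 : ∀ x ∈ Icc a b, HasDerivWithinAt φ (φ' x) (Icc a b) x)
    (hd2 : ∀ x ∈ Icc a b, HasDerivWithinAt φ' (φ'' x) (Icc a b) x)
    (hc2 : ContinuousOn φ'' (Icc a b))
    (hsign : (∀ x ∈ Icc a b, 0 ≤ φ'' x) ∨ (∀ x ∈ Icc a b, φ'' x ≤ 0))
    (hlow : ∀ x ∈ Icc a b, mu ≤ |φ' x|) :
    ‖∫ x in a..b, Complex.exp (Complex.I * (t : ℂ) * ((φ x : ℝ) : ℂ))‖ ≤ 4 / (mu * |t|) := by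
  have ht' : (0:ℝ) < |t| := abs_pos.mpr ht
  have htC : (Complex.I * (t : ℂ)) ≠ 0 := by
    simp [Complex.I_ne_zero, Complex.ofReal_ne_zero, ht]
  have hne : ∀ x ∈ Icc a b, φ' x ≠ 0 := fun x hx => by
    have := hlow x hx; intro h; rw [h] at this; simp at this; linarith
  have hneC : ∀ x ∈ Icc a b, (Complex.I * (t : ℂ) * (φ' x : ℂ)) ≠ 0 := fun x hx =>
    mul_ne_zero htC (by exact_mod_cast Complex.ofReal_ne_zero.mpr (hne x hx))
  set F : ℝ → ℂ := fun x => Complex.exp (Complex.I * (t : ℂ) * ((φ x : ℝ) : ℂ)) with hF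
  set r : ℝ → ℂ := fun x => F x * ((φ'' x : ℂ) / (Complex.I * (t : ℂ) * ((φ' x : ℂ))^2)) with hr
  set ψ : ℝ → ℂ := fun x => F x / (Complex.I * (t : ℂ) * (φ' x : ℂ)) with hψ
  -- derivative of F
  have hFd : ∀ x ∈ Icc a b, HasDerivWithinAt F
      (F x * (Complex.I * (t : ℂ) * (φ' x : ℂ))) (Icc a b) x := by
    intro x hx
    have h1 : HasDerivWithinAt (fun x => Complex.I * (t : ℂ) * ((φ x : ℝ) : ℂ))
        (Complex.I * (t : ℂ) * (φ' x : ℂ)) (Icc a b) x :=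
      (vdc_ofReal (hd1 x hx)).const_mul (Complex.I * (t : ℂ))
    exact h1.cexp
  -- derivative of ψ
  have hψd : ∀ x ∈ Icc a b, HasDerivWithinAt ψ (F x - r x) (Icc a b) x := by
    intro x hx
    have h2 : HasDerivWithinAt (fun x => Complex.I * (t : ℂ) * (φ' x : ℂ))
        (Complex.I * (t : ℂ) * (φ'' x : ℂ)) (Icc a b) x :=
      (vdc_ofReal (hd2 x hx)).const_mul (Complex.I * (t : ℂ))
    have h3 := (hFd x hx).div h2 (hneC x hx)
    have heq : (F x * (Complex.I * (t : ℂ) * (φ' x : ℂ)) * (Complex.I * (t : ℂ) * (φ' x : ℂ))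
        - F x * (Complex.I * (t : ℂ) * (φ'' x : ℂ))) / (Complex.I * (t : ℂ) * (φ' x : ℂ))^2
        = F x - r x := by
      rw [hr]
      have h4 : ((φ' x : ℂ)) ≠ 0 := Complex.ofReal_ne_zero.mpr (hne x hx)
      have h5 : (t : ℂ) ≠ 0 := Complex.ofReal_ne_zero.mpr ht
      field_simp
    rw [← heq]
    exact h3
  -- continuity facts
  have hφ'c : ContinuousOn φ' (Icc a b) := fun x hx => (hd2 x hx).continuousWithinAt
  have hFc : ContinuousOn F (Icc a b) := fun x hx => (hFd x hx).continuousWithinAt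
  have hrc : ContinuousOn r (Icc a b) := by
    apply hFc.mul
    apply ContinuousOn.div (Complex.continuous_ofReal.comp_continuousOn hc2)
    · exact continuousOn_const.mul ((Complex.continuous_ofReal.comp_continuousOn hφ'c).pow 2)
    · intro x hx
      exact mul_ne_zero htC (pow_ne_zero 2 (Complex.ofReal_ne_zero.mpr (hne x hx)))
  have hFint : IntervalIntegrable F volume a b := hFc.intervalIntegrable_of_Icc hab
  have hrint : IntervalIntegrable r volume a b := hrc.intervalIntegrable_of_Icc hab
  -- FTC
  have hFTC : ∫ x in a..b, (F x - r x) = ψ b - ψ a := by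
    apply intervalIntegral.integral_eq_sub_of_hasDeriv_right_of_le hab
      (fun x hx => (hψd x hx).continuousWithinAt)
      (fun x hx => ((hψd x (Ioo_subset_Icc_self hx)).hasDerivAt
        (Icc_mem_nhds hx.1 hx.2)).hasDerivWithinAt)
      (hFint.sub hrint)
  have hsplit : ∫ x in a..b, F x = ψ b - ψ a + ∫ x in a..b, r x := by
    rw [← hFTC, intervalIntegral.integral_sub hFint hrint]; ring
  -- FTC for 1/φ'
  have hinvd : ∀ x ∈ Icc a b, HasDerivWithinAt (fun x => (φ' x)⁻¹)
      (-φ'' x / (φ' x)^2) (Icc a b) x := fun x hx => (hd2 x hx).inv (hne x hx)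
  have hinvc : ContinuousOn (fun x => -φ'' x / (φ' x)^2) (Icc a b) := by
    apply ContinuousOn.div hc2.neg (hφ'c.pow 2)
    exact fun x hx => pow_ne_zero 2 (hne x hx)
  have hFTC2 : ∫ x in a..b, -φ'' x / (φ' x)^2 = (φ' b)⁻¹ - (φ' a)⁻¹ := by
    apply intervalIntegral.integral_eq_sub_of_hasDeriv_right_of_le hab
      (fun x hx => (hinvd x hx).continuousWithinAt)
      (fun x hx => ((hinvd x (Ioo_subset_Icc_self hx)).hasDerivAt
        (Icc_mem_nhds hx.1 hx.2)).hasDerivWithinAt)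
      (hinvc.intervalIntegrable_of_Icc hab)
  -- norm of r
  have hrnorm : ∀ x ∈ Icc a b, ‖r x‖ = |φ'' x| / (|t| * (φ' x)^2) := by
    intro x hx
    rw [hr]
    simp only [norm_mul, norm_div, vdc_norm_exp, one_mul, norm_pow,
      Complex.norm_real, Real.norm_eq_abs, Complex.norm_I, Complex.norm_real]
    have h1 : ‖F x‖ = 1 := by
      exact vdc_norm_exp t (φ x)
    rw [h1, one_mul, sq_abs]
  -- norm of ψ
  have hψn : ∀ x ∈ Icc a b, ‖ψ x‖ ≤ 1 / (mu * |t|) := by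
    intro x hx
    rw [hψ]
    simp only [norm_div]
    have h1 : ‖F x‖ = 1 := vdc_norm_exp t (φ x)
    have h2 : ‖Complex.I * (t:ℂ) * ((φ' x : ℝ):ℂ)‖ = |t| * |φ' x| := by
      simp [map_mul, Complex.norm_I, Complex.norm_real]
    rw [h1, h2]
    have h3 : 0 < mu * |t| := mul_pos hmu ht'
    have h4 : mu * |t| ≤ |t| * |φ' x| := by
      have := hlow x hx
      nlinarith
    
    exact one_div_le_one_div_of_le h3 h4
  -- bound on ∫ ‖r‖
  have hmuinv : ∀ x ∈ Icc a b, |(φ' x)⁻¹| ≤ mu⁻¹ := by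
    intro x hx
    rw [abs_inv]
    exact inv_anti₀ hmu (hlow x hx)
  have hrbound : ∫ x in a..b, ‖r x‖ ≤ 2 / (mu * |t|) := by
    have hieq : ∫ x in a..b, ‖r x‖ = ∫ x in a..b, |φ'' x| / (|t| * (φ' x)^2) := by
      apply intervalIntegral.integral_congr
      intro x hx
      exact hrnorm x (by rwa [uIcc_of_le hab] at hx)
    have hinva := hmuinv a ⟨le_refl a, hab⟩
    have hinvb := hmuinv b ⟨hab, le_refl b⟩
    have habs1 : -((φ' b)⁻¹ - (φ' a)⁻¹) ≤ 2 * mu⁻¹ := by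
      have := abs_le.mp (le_refl |(φ' b)⁻¹|)
      have h5 := neg_abs_le (φ' b)⁻¹
      have h6 := le_abs_self (φ' a)⁻¹
      linarith
    have habs2 : (φ' b)⁻¹ - (φ' a)⁻¹ ≤ 2 * mu⁻¹ := by
      have h5 := le_abs_self (φ' b)⁻¹
      have h6 := neg_abs_le (φ' a)⁻¹
      linarith
    have hfin : |t|⁻¹ * (2 * mu⁻¹) = 2 / (mu * |t|) := by
      field_simp
    rcases hsign with hpos | hneg
    · have hval : ∫ x in a..b, |φ'' x| / (|t| * (φ' x)^2)
          = -|t|⁻¹ * ((φ' b)⁻¹ - (φ' a)⁻¹) := by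
        rw [← hFTC2, ← intervalIntegral.integral_const_mul]
        apply intervalIntegral.integral_congr
        intro x hx
        rw [uIcc_of_le hab] at hx
        simp only
        rw [abs_of_nonneg (hpos x hx)]
        have h7 := hne x hx
        have h8 := ht'.ne'
        field_simp
      rw [hieq, hval, ← hfin]
      have h9 : -((φ' b)⁻¹ - (φ' a)⁻¹) ≤ 2 * mu⁻¹ := habs1
      have h10 : (0:ℝ) ≤ |t|⁻¹ := inv_nonneg.mpr (le_of_lt ht')
      nlinarith
    · have hval : ∫ x in a..b, |φ'' x| / (|t| * (φ' x)^2)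
          = |t|⁻¹ * ((φ' b)⁻¹ - (φ' a)⁻¹) := by
        rw [← hFTC2, ← intervalIntegral.integral_const_mul]
        apply intervalIntegral.integral_congr
        intro x hx
        rw [uIcc_of_le hab] at hx
        simp only
        rw [abs_of_nonpos (hneg x hx)]
        have h7 := hne x hx
        have h8 := ht'.ne'
        field_simp
      rw [hieq, hval, ← hfin]
      have h10 : (0:ℝ) ≤ |t|⁻¹ := inv_nonneg.mpr (le_of_lt ht')
      nlinarith
  -- conclude
  have hra := hψn a ⟨le_refl a, hab⟩
  have hrb := hψn b ⟨hab, le_refl b⟩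
  have hrn : ‖∫ x in a..b, r x‖ ≤ ∫ x in a..b, ‖r x‖ :=
    intervalIntegral.norm_integral_le_integral_norm hab
  calc ‖∫ x in a..b, F x‖ = ‖ψ b - ψ a + ∫ x in a..b, r x‖ := by rw [hsplit]
    _ ≤ ‖ψ b - ψ a‖ + ‖∫ x in a..b, r x‖ := norm_add_le _ _
    _ ≤ (‖ψ b‖ + ‖ψ a‖) + ∫ x in a..b, ‖r x‖ :=
        add_le_add (norm_sub_le _ _) hrn
    _ ≤ (1 / (mu * |t|) + 1 / (mu * |t|)) + 2 / (mu * |t|) :=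
        add_le_add (add_le_add hrb hra) hrbound
    _ = 4 / (mu * |t|) := by ring


lemma vdc_step {a b lam δ B : ℝ} {F : ℝ → ℂ} {g : ℝ → ℝ} (hab : a ≤ b) (hδ : 0 < δ)
    (hlam : 0 < lam) (hB : 0 ≤ B)
    (hF : ContinuousOn F (Icc a b)) (hF1 : ∀ x ∈ Icc a b, ‖F x‖ ≤ 1)
    (hgc : ContinuousOn g (Icc a b))
    (hslope : ∀ x ∈ Icc a b, ∀ y ∈ Icc a b, x ≤ y → lam * (y - x) ≤ g y - g x)
    (hsub : ∀ a' b', a ≤ a' → a' ≤ b' → b' ≤ b → (∀ x ∈ Icc a' b', lam * δ ≤ |g x|) →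
      ‖∫ x in a'..b', F x‖ ≤ B) :
    ‖∫ x in a..b, F x‖ ≤ 2 * δ + 2 * B := by
  have hint : ∀ p q : ℝ, a ≤ p → p ≤ q → q ≤ b → IntervalIntegrable F volume p q :=
    fun p q hp hpq hq =>
      (hF.mono (Icc_subset_Icc hp hq)).intervalIntegrable_of_Icc hpq
  have hshort : ∀ p q : ℝ, a ≤ p → p ≤ q → q ≤ b → ‖∫ x in p..q, F x‖ ≤ q - p := by
    intro p q hp hpq hq
    have h1 : ‖∫ x in p..q, F x‖ ≤ 1 * |q - p| := by
      apply intervalIntegral.norm_integral_le_of_norm_le_const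
      intro x hx
      rw [uIoc_of_le hpq] at hx
      exact hF1 x ⟨le_trans hp (le_of_lt hx.1), le_trans hx.2 hq⟩
    rwa [one_mul, abs_of_nonneg (by linarith)] at h1
  by_cases hb2 : b ≤ a + 2 * δ
  · have := hshort a b (le_refl a) hab (le_refl b)
    linarith
  push_neg at hb2
  have h2δ : a + 2 * δ ≤ b := le_of_lt hb2
  have hlamδ : 0 < lam * δ := mul_pos hlam hδ
  rcases le_or_gt (-(lam * δ)) (g a) with hga | hga
  · -- g ≥ lam δ on [a + 2δ, b]
    have hkey : ∀ x ∈ Icc (a + 2*δ) b, lam * δ ≤ |g x| := by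
      intro x hx
      have hx' : x ∈ Icc a b := ⟨by linarith [hx.1], hx.2⟩
      have := hslope a ⟨le_refl a, hab⟩ x hx' (by linarith [hx.1])
      have hgx : lam * δ ≤ g x := by nlinarith [hx.1]
      exact le_trans hgx (le_abs_self _)
    have hsplit : ∫ x in a..b, F x = (∫ x in a..(a+2*δ), F x) + ∫ x in (a+2*δ)..b, F x :=
      (intervalIntegral.integral_add_adjacent_intervals
        (hint a (a+2*δ) (le_refl a) (by linarith) h2δ)
        (hint (a+2*δ) b (by linarith) h2δ (le_refl b))).symm
    rw [hsplit]
    have h1 := hshort a (a+2*δ) (le_refl a) (by linarith) h2δ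
    have h2 := hsub (a+2*δ) b (by linarith) h2δ (le_refl b) hkey
    calc ‖(∫ x in a..(a+2*δ), F x) + ∫ x in (a+2*δ)..b, F x‖
        ≤ ‖∫ x in a..(a+2*δ), F x‖ + ‖∫ x in (a+2*δ)..b, F x‖ := norm_add_le _ _
      _ ≤ 2 * δ + 2 * B := by linarith
  rcases le_or_gt (g b) (lam * δ) with hgb | hgb
  · -- g ≤ -lam δ on [a, b - 2δ]
    have hkey : ∀ x ∈ Icc a (b - 2*δ), lam * δ ≤ |g x| := by
      intro x hx
      have hx' : x ∈ Icc a b := ⟨hx.1, by linarith [hx.2]⟩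
      have := hslope x hx' b ⟨hab, le_refl b⟩ (by linarith [hx.2])
      have hgx : lam * δ ≤ -g x := by nlinarith [hx.2]
      exact le_trans hgx (neg_le_abs _)
    have hsplit : ∫ x in a..b, F x = (∫ x in a..(b-2*δ), F x) + ∫ x in (b-2*δ)..b, F x :=
      (intervalIntegral.integral_add_adjacent_intervals
        (hint a (b-2*δ) (le_refl a) (by linarith) (by linarith))
        (hint (b-2*δ) b (by linarith) (by linarith) (le_refl b))).symm
    rw [hsplit]
    have h1 := hsub a (b-2*δ) (le_refl a) (by linarith) (by linarith) hkey
    have h2 := hshort (b-2*δ) b (by linarith) (by linarith) (le_refl b)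
    calc ‖(∫ x in a..(b-2*δ), F x) + ∫ x in (b-2*δ)..b, F x‖
        ≤ ‖∫ x in a..(b-2*δ), F x‖ + ‖∫ x in (b-2*δ)..b, F x‖ := norm_add_le _ _
      _ ≤ 2 * δ + 2 * B := by linarith
  · -- middle case with IVT
    obtain ⟨c, hc, hgc0⟩ : ∃ c ∈ Icc a b, g c = 0 := by
      have h0 : (0:ℝ) ∈ Icc (g a) (g b) := ⟨by linarith, by linarith⟩
      obtain ⟨c, hc, hgc0⟩ := intermediate_value_Icc hab hgc h0
      exact ⟨c, hc, hgc0⟩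
    set u := max a (c - δ) with hu
    set v := min b (c + δ) with hv
    have hau : a ≤ u := le_max_left _ _
    have huc : u ≤ c := max_le hc.1 (by linarith)
    have hcv : c ≤ v := le_min hc.2 (by linarith)
    have hvb : v ≤ b := min_le_left _ _
    have huv : u ≤ v := le_trans huc hcv
    have hkeyl : ∀ x ∈ Icc a u, lam * δ ≤ |g x| := by
      intro x hx
      have hx' : x ∈ Icc a b := ⟨hx.1, le_trans hx.2 (le_trans huv hvb)⟩
      rcases le_or_gt x (c - δ) with h | h
      · have := hslope x hx' c hc (by linarith)
        have : lam * δ ≤ -g x := by nlinarith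
        exact le_trans this (neg_le_abs _)
      · have hxa : x ≤ a := by
          rcases le_max_iff.mp hx.2 with h' | h'
          · exact h'
          · linarith
        have hxea : x = a := le_antisymm hxa hx.1
        rw [hxea]
        have : lam * δ ≤ -g a := by linarith
        exact le_trans this (neg_le_abs _)
    have hkeyr : ∀ x ∈ Icc v b, lam * δ ≤ |g x| := by
      intro x hx
      have hx' : x ∈ Icc a b := ⟨le_trans (le_trans hau huv) hx.1, hx.2⟩
      rcases le_or_gt (c + δ) x with h | h
      · have := hslope c hc x hx' (by linarith)
        have : lam * δ ≤ g x := by nlinarith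
        exact le_trans this (le_abs_self _)
      · have hxb : b ≤ x := by
          rcases min_le_iff.mp hx.1 with h' | h'
          · exact h'
          · linarith
        have hxeb : x = b := le_antisymm hx.2 hxb
        rw [hxeb]
        have : lam * δ ≤ g b := by linarith
        exact le_trans this (le_abs_self _)
    have hsplit : ∫ x in a..b, F x
        = ((∫ x in a..u, F x) + ∫ x in u..v, F x) + ∫ x in v..b, F x := by
      rw [intervalIntegral.integral_add_adjacent_intervals
        (hint a u (le_refl a) hau (le_trans huv hvb))
        (hint u v hau huv hvb)]
      rw [intervalIntegral.integral_add_adjacent_intervals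
        (hint a v (le_refl a) (le_trans hau huv) hvb)
        (hint v b (le_trans hau huv) hvb (le_refl b))]
    rw [hsplit]
    have h1 := hsub a u (le_refl a) hau (le_trans huv hvb) hkeyl
    have h2 := hshort u v hau huv hvb
    have h3 := hsub v b (le_trans hau huv) hvb (le_refl b) hkeyr
    have h4 : v - u ≤ 2 * δ := by
      have := le_max_right a (c - δ)
      have := min_le_right b (c + δ)
      simp only [hu, hv]
      have h5 : c - δ ≤ u := le_max_right a (c - δ)
      have h6 : v ≤ c + δ := min_le_right b (c + δ)
      linarith
    calc ‖((∫ x in a..u, F x) + ∫ x in u..v, F x) + ∫ x in v..b, F x‖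
        ≤ ‖(∫ x in a..u, F x) + ∫ x in u..v, F x‖ + ‖∫ x in v..b, F x‖ := norm_add_le _ _
      _ ≤ ‖∫ x in a..u, F x‖ + ‖∫ x in u..v, F x‖ + ‖∫ x in v..b, F x‖ :=
          add_le_add_left (norm_add_le _ _) _
      _ ≤ 2 * δ + 2 * B := by linarith
lemma vdc_key2 {a b t lam : ℝ} {φ φ' φ'' φ''' : ℝ → ℝ} (hab : a ≤ b) (ht : t ≠ 0)
    (hlam : 0 < lam)
    (hd1 : ∀ x ∈ Icc a b, HasDerivWithinAt φ (φ' x) (Icc a b) x)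
    (hd2 : ∀ x ∈ Icc a b, HasDerivWithinAt φ' (φ'' x) (Icc a b) x)
    (hd3 : ∀ x ∈ Icc a b, HasDerivWithinAt φ'' (φ''' x) (Icc a b) x)
    (hlow : ∀ x ∈ Icc a b, lam ≤ |φ'' x|) :
    ‖∫ x in a..b, Complex.exp (Complex.I * (t : ℂ) * ((φ x : ℝ) : ℂ))‖
      ≤ 10 * (lam * |t|) ^ (-(1/2) : ℝ) := by
  have ht' : 0 < |t| := abs_pos.mpr ht
  have hP : 0 < lam * |t| := mul_pos hlam ht'
  set δ : ℝ := (lam * |t|) ^ (-(1/2) : ℝ) with hδdef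
  have hδ : 0 < δ := rpow_pos_of_pos hP _
  have hlamδ : 0 < lam * δ := mul_pos hlam hδ
  -- B = 4 / (lam * δ * |t|) equals 4 * δ
  have hPhalf : lam * δ * |t| = (lam * |t|) ^ ((1:ℝ)/2) := by
    calc lam * δ * |t| = (lam * |t|) ^ (1:ℝ) * (lam * |t|) ^ (-(1/2) : ℝ) := by
          rw [Real.rpow_one, hδdef]; ring
      _ = (lam * |t|) ^ ((1:ℝ) + -(1/2)) := (Real.rpow_add hP _ _).symm
      _ = (lam * |t|) ^ ((1:ℝ)/2) := by norm_num
  have hBeq : 4 / (lam * δ * |t|) = 4 * δ := by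
    rw [hPhalf, hδdef, div_eq_mul_inv, ← Real.rpow_neg (le_of_lt hP)]
  have hB0 : (0:ℝ) ≤ 4 / (lam * δ * |t|) := by positivity
  have hc2 : ContinuousOn φ'' (Icc a b) := fun x hx => (hd3 x hx).continuousWithinAt
  have hφ'c : ContinuousOn φ' (Icc a b) := fun x hx => (hd2 x hx).continuousWithinAt
  have hφc : ContinuousOn φ (Icc a b) := fun x hx => (hd1 x hx).continuousWithinAt
  have hFc : ContinuousOn (fun x => Complex.exp (Complex.I * (t : ℂ) * ((φ x : ℝ) : ℂ)))
      (Icc a b) :=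
    Complex.continuous_exp.comp_continuousOn
      (continuousOn_const.mul (Complex.continuous_ofReal.comp_continuousOn hφc))
  have hF1 : ∀ x ∈ Icc a b, ‖Complex.exp (Complex.I * (t : ℂ) * ((φ x : ℝ) : ℂ))‖ ≤ 1 :=
    fun x _ => le_of_eq (vdc_norm_exp t (φ x))
  have hfin : 2 * δ + 2 * (4 / (lam * δ * |t|)) ≤ 10 * (lam * |t|) ^ (-(1/2) : ℝ) := by
    rw [hBeq, ← hδdef]; linarith
  refine le_trans ?_ hfin
  rcases vdc_sign hc2 hlam hlow with hpos | hneg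
  · apply vdc_step hab hδ hlam hB0 hFc hF1 hφ'c
      (vdc_slope hd2 hpos)
    intro a' b' ha' hab' hb' hg
    have hsubset : Icc a' b' ⊆ Icc a b := Icc_subset_Icc ha' hb'
    exact vdc_key1 hab' ht hlamδ
      (fun x hx => (hd1 x (hsubset hx)).mono hsubset)
      (fun x hx => (hd2 x (hsubset hx)).mono hsubset)
      (hc2.mono hsubset)
      (Or.inl fun x hx => le_trans (le_of_lt hlam) (hpos x (hsubset hx)))
      hg
  · apply vdc_step hab hδ hlam hB0 hFc hF1 hφ'c.neg
      (vdc_slope (g := fun x => -φ' x) (g' := fun x => -φ'' x)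
        (fun x hx => (hd2 x hx).neg) (fun x hx => by show lam ≤ -_; linarith [hneg x hx]))
    intro a' b' ha' hab' hb' hg
    have hsubset : Icc a' b' ⊆ Icc a b := Icc_subset_Icc ha' hb'
    apply vdc_key1 hab' ht hlamδ
      (fun x hx => (hd1 x (hsubset hx)).mono hsubset)
      (fun x hx => (hd2 x (hsubset hx)).mono hsubset)
      (hc2.mono hsubset)
      (Or.inr fun x hx => le_trans (hneg x (hsubset hx)) (by linarith))
    intro x hx
    have := hg x hx
    rwa [Pi.neg_apply, abs_neg] at this

lemma vdc_key3 {a b t lam : ℝ} {φ φ' φ'' φ''' : ℝ → ℝ} (hab : a ≤ b) (ht : t ≠ 0)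
    (hlam : 0 < lam)
    (hd1 : ∀ x ∈ Icc a b, HasDerivWithinAt φ (φ' x) (Icc a b) x)
    (hd2 : ∀ x ∈ Icc a b, HasDerivWithinAt φ' (φ'' x) (Icc a b) x)
    (hd3 : ∀ x ∈ Icc a b, HasDerivWithinAt φ'' (φ''' x) (Icc a b) x)
    (hc3 : ContinuousOn φ''' (Icc a b))
    (hlow : ∀ x ∈ Icc a b, lam ≤ |φ''' x|) :
    ‖∫ x in a..b, Complex.exp (Complex.I * (t : ℂ) * ((φ x : ℝ) : ℂ))‖
      ≤ 22 * (lam * |t|) ^ (-(1/3) : ℝ) := by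
  have ht' : 0 < |t| := abs_pos.mpr ht
  have hP : 0 < lam * |t| := mul_pos hlam ht'
  set δ : ℝ := (lam * |t|) ^ (-(1/3) : ℝ) with hδdef
  have hδ : 0 < δ := rpow_pos_of_pos hP _
  have hlamδ : 0 < lam * δ := mul_pos hlam hδ
  have hP23 : lam * δ * |t| = (lam * |t|) ^ ((2:ℝ)/3) := by
    calc lam * δ * |t| = (lam * |t|) ^ (1:ℝ) * (lam * |t|) ^ (-(1/3) : ℝ) := by
          rw [Real.rpow_one, hδdef]; ring
      _ = (lam * |t|) ^ ((1:ℝ) + -(1/3)) := (Real.rpow_add hP _ _).symm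
      _ = (lam * |t|) ^ ((2:ℝ)/3) := by norm_num
  have hBeq : 10 * (lam * δ * |t|) ^ (-(1/2) : ℝ) = 10 * δ := by
    rw [hP23, ← Real.rpow_mul (le_of_lt hP), hδdef]
    norm_num
  have hB0 : (0:ℝ) ≤ 10 * (lam * δ * |t|) ^ (-(1/2) : ℝ) := by positivity
  have hc2 : ContinuousOn φ'' (Icc a b) := fun x hx => (hd3 x hx).continuousWithinAt
  have hφc : ContinuousOn φ (Icc a b) := fun x hx => (hd1 x hx).continuousWithinAt
  have hFc : ContinuousOn (fun x => Complex.exp (Complex.I * (t : ℂ) * ((φ x : ℝ) : ℂ)))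
      (Icc a b) :=
    Complex.continuous_exp.comp_continuousOn
      (continuousOn_const.mul (Complex.continuous_ofReal.comp_continuousOn hφc))
  have hF1 : ∀ x ∈ Icc a b, ‖Complex.exp (Complex.I * (t : ℂ) * ((φ x : ℝ) : ℂ))‖ ≤ 1 :=
    fun x _ => le_of_eq (vdc_norm_exp t (φ x))
  have hfin : 2 * δ + 2 * (10 * (lam * δ * |t|) ^ (-(1/2) : ℝ))
      ≤ 22 * (lam * |t|) ^ (-(1/3) : ℝ) := by
    rw [hBeq, ← hδdef]; linarith
  refine le_trans ?_ hfin
  rcases vdc_sign hc3 hlam hlow with hpos | hneg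
  · apply vdc_step hab hδ hlam hB0 hFc hF1 hc2
      (vdc_slope hd3 hpos)
    intro a' b' ha' hab' hb' hg
    have hsubset : Icc a' b' ⊆ Icc a b := Icc_subset_Icc ha' hb'
    exact vdc_key2 hab' ht hlamδ
      (fun x hx => (hd1 x (hsubset hx)).mono hsubset)
      (fun x hx => (hd2 x (hsubset hx)).mono hsubset)
      (fun x hx => (hd3 x (hsubset hx)).mono hsubset)
      hg
  · apply vdc_step hab hδ hlam hB0 hFc hF1 hc2.neg
      (vdc_slope (g := fun x => -φ'' x) (g' := fun x => -φ''' x)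
        (fun x hx => (hd3 x hx).neg) (fun x hx => by show lam ≤ -_; linarith [hneg x hx]))
    intro a' b' ha' hab' hb' hg
    have hsubset : Icc a' b' ⊆ Icc a b := Icc_subset_Icc ha' hb'
    apply vdc_key2 hab' ht hlamδ
      (fun x hx => (hd1 x (hsubset hx)).mono hsubset)
      (fun x hx => (hd2 x (hsubset hx)).mono hsubset)
      (fun x hx => (hd3 x (hsubset hx)).mono hsubset)
    intro x hx
    have := hg x hx
    rwa [Pi.neg_apply, abs_neg] at this

/-- Van der Corput lemma, third-derivative case: there is an absolute constant C
    such that if φ is C³ on [a,b] with |φ'''| ≥ λ > 0 on [a,b], then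
    |∫ₐᵇ e^{itφ(x)} dx| ≤ C λ^{−1/3} |t|^{−1/3} for all t ≠ 0. -/
theorem stmt3 :
    ∃ C : ℝ, 0 < C ∧
      ∀ (a b : ℝ) (φ : ℝ → ℝ) (lam t : ℝ), a ≤ b → 0 < lam → t ≠ 0 →
        ContDiffOn ℝ 3 φ (Icc a b) →
        (∀ x ∈ Icc a b, lam ≤ |iteratedDerivWithin 3 φ (Icc a b) x|) →
        ‖∫ x in a..b, Complex.exp (Complex.I * (t : ℂ) * ((φ x : ℝ) : ℂ))‖
          ≤ C * lam ^ (-(1/3) : ℝ) * |t| ^ (-(1/3) : ℝ) := by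
  refine ⟨22, by norm_num, ?_⟩
  intro a b φ lam t hab hlam ht hφ hlow
  have ht' : 0 < |t| := abs_pos.mpr ht
  have hrhs : 22 * lam ^ (-(1/3) : ℝ) * |t| ^ (-(1/3) : ℝ)
      = 22 * (lam * |t|) ^ (-(1/3) : ℝ) := by
    rw [Real.mul_rpow (le_of_lt hlam) (le_of_lt ht'), mul_assoc]
  rcases eq_or_lt_of_le hab with heq | hlt
  · subst heq
    rw [intervalIntegral.integral_same, norm_zero, hrhs]
    positivity
  · have uds : UniqueDiffOn ℝ (Icc a b) := uniqueDiffOn_Icc hlt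
    set s : Set ℝ := Icc a b with hs
    set φ1 : ℝ → ℝ := derivWithin φ s with hφ1
    set φ2 : ℝ → ℝ := derivWithin φ1 s with hφ2
    set φ3 : ℝ → ℝ := derivWithin φ2 s with hφ3
    have hC2 : ContDiffOn ℝ 2 φ1 s := hφ.derivWithin uds (by norm_num)
    have hC1 : ContDiffOn ℝ 1 φ2 s := hC2.derivWithin uds (by norm_num)
    have hC0 : ContDiffOn ℝ 0 φ3 s := hC1.derivWithin uds (by norm_num)
    have hd1 : ∀ x ∈ s, HasDerivWithinAt φ (φ1 x) s x := fun x hx =>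
      ((hφ.differentiableOn (by norm_num)) x hx).hasDerivWithinAt
    have hd2 : ∀ x ∈ s, HasDerivWithinAt φ1 (φ2 x) s x := fun x hx =>
      ((hC2.differentiableOn (by norm_num)) x hx).hasDerivWithinAt
    have hd3 : ∀ x ∈ s, HasDerivWithinAt φ2 (φ3 x) s x := fun x hx =>
      ((hC1.differentiableOn (by norm_num)) x hx).hasDerivWithinAt
    have hc3 : ContinuousOn φ3 s := hC0.continuousOn
    have hiter : ∀ x ∈ s, iteratedDerivWithin 3 φ s x = φ3 x := by
      intro x hx
      rw [show (3:ℕ) = 2 + 1 from rfl, iteratedDerivWithin_succ',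
        show (2:ℕ) = 1 + 1 from rfl, iteratedDerivWithin_succ',
        iteratedDerivWithin_succ', iteratedDerivWithin_zero]
    have hlow' : ∀ x ∈ s, lam ≤ |φ3 x| := by
      intro x hx
      rw [← hiter x hx]
      exact hlow x hx
    rw [hrhs]
    exact vdc_key3 hab ht hlam hd1 hd2 hd3 hc3 hlow'
end

section
/- Uniform lower bound on derivatives of the Klein-Gordon phase: for every s ∈ ℝ and every x ∈ ℝ, the phase ψ(x) = √(1 + sin²(x)) − s·x satisfies max(|ψ'(x)|, |ψ''(x)|, |ψ'''(x)|) ≥ c for some absolute constant c > 0 (one may take c = 1/2). -/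
open Real



noncomputable def KGF (x : ℝ) : ℝ := Real.sqrt (1 + Real.sin x ^ 2)
noncomputable def KGF1 (x : ℝ) : ℝ :=
  Real.sin x * Real.cos x / Real.sqrt (1 + Real.sin x ^ 2)
noncomputable def KGF2 (x : ℝ) : ℝ :=
  (1 - 2 * Real.sin x ^ 2 - (Real.sin x ^ 2) ^ 2) /
    ((1 + Real.sin x ^ 2) * Real.sqrt (1 + Real.sin x ^ 2))
noncomputable def KGF3 (x : ℝ) : ℝ :=
  -(Real.sin x * Real.cos x) * ((Real.sin x ^ 2) ^ 2 + 2 * Real.sin x ^ 2 + 7) /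
    ((1 + Real.sin x ^ 2) ^ 2 * Real.sqrt (1 + Real.sin x ^ 2))

lemma gpos (x : ℝ) : 0 < 1 + Real.sin x ^ 2 := by positivity
lemma sqpos (x : ℝ) : 0 < Real.sqrt (1 + Real.sin x ^ 2) := Real.sqrt_pos.2 (gpos x)
lemma sqne (x : ℝ) : Real.sqrt (1 + Real.sin x ^ 2) ≠ 0 := (sqpos x).ne'
lemma sqsq (x : ℝ) : Real.sqrt (1 + Real.sin x ^ 2) * Real.sqrt (1 + Real.sin x ^ 2)
    = 1 + Real.sin x ^ 2 := Real.mul_self_sqrt (gpos x).le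

lemma hg (x : ℝ) : HasDerivAt (fun y : ℝ => 1 + Real.sin y ^ 2)
    (2 * Real.sin x * Real.cos x) x := by
  have := ((Real.hasDerivAt_sin x).pow 2).const_add (1 : ℝ)
  simpa [mul_comm, mul_assoc, mul_left_comm] using this

lemma hKGF1 (x : ℝ) : HasDerivAt KGF (KGF1 x) x := by
  have h := (hg x).sqrt (gpos x).ne'
  refine h.congr_deriv ?_
  unfold KGF1
  field_simp

lemma hKGF2 (x : ℝ) : HasDerivAt KGF1 (KGF2 x) x := by
  have hn : HasDerivAt (fun y : ℝ => Real.sin y * Real.cos y)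
      (Real.cos x ^ 2 - Real.sin x ^ 2) x := by
    have := (Real.hasDerivAt_sin x).mul (Real.hasDerivAt_cos x)
    refine this.congr_deriv ?_; ring
  have hd : HasDerivAt (fun y : ℝ => Real.sqrt (1 + Real.sin y ^ 2))
      (2 * Real.sin x * Real.cos x / (2 * Real.sqrt (1 + Real.sin x ^ 2))) x :=
    (hg x).sqrt (gpos x).ne'
  have h := hn.div hd (sqne x)
  refine h.congr_deriv ?_
  unfold KGF2
  have hs := sqsq x
  have hc : Real.cos x ^ 2 = 1 - Real.sin x ^ 2 := by
    have := Real.sin_sq_add_cos_sq x; linarith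
  set R := Real.sqrt (1 + Real.sin x ^ 2) with hR
  have hR0 : R ≠ 0 := sqne x
  field_simp
  linear_combination ((Real.cos x ^ 2 - Real.sin x ^ 2) * (1 + Real.sin x ^ 2)
      - (1 - 2 * Real.sin x ^ 2 - Real.sin x ^ 4)) * hs
    + (1 + Real.sin x ^ 2) * hc

lemma hKGF3 (x : ℝ) : HasDerivAt KGF2 (KGF3 x) x := by
  have hn : HasDerivAt (fun y : ℝ => 1 - 2 * Real.sin y ^ 2 - (Real.sin y ^ 2) ^ 2)
      (-(4:ℝ) * Real.sin x * Real.cos x * (1 + Real.sin x ^ 2)) x := by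
    have h1 := (Real.hasDerivAt_sin x).pow 2
    have h2 : HasDerivAt (fun y : ℝ => (Real.sin y ^ 2) ^ 2)
        (2 * (Real.sin x ^ 2) * (2 * Real.sin x * Real.cos x)) x := by
      have := h1.pow 2
      refine this.congr_deriv ?_; simp only [Pi.pow_apply]; ring
    have := ((h1.const_mul (2:ℝ)).add h2).const_sub (1 : ℝ)
    refine (this.congr_of_eventuallyEq (Filter.Eventually.of_forall fun y => ?_)).congr_deriv ?_
    · simp only [Pi.add_apply, Pi.pow_apply]; ring
    · norm_num; ring
  have hd : HasDerivAt (fun y : ℝ => (1 + Real.sin y ^ 2) * Real.sqrt (1 + Real.sin y ^ 2))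
      (2 * Real.sin x * Real.cos x * Real.sqrt (1 + Real.sin x ^ 2)
        + (1 + Real.sin x ^ 2) * (2 * Real.sin x * Real.cos x / (2 * Real.sqrt (1 + Real.sin x ^ 2)))) x :=
    (hg x).mul ((hg x).sqrt (gpos x).ne')
  have h := hn.div hd (by positivity)
  refine h.congr_deriv ?_
  unfold KGF3
  have hs := sqsq x
  set R := Real.sqrt (1 + Real.sin x ^ 2) with hR
  have hR0 : R ≠ 0 := sqne x
  field_simp
  linear_combination (Real.sin x * Real.cos x * (-4 * (1 + Real.sin x ^ 2) ^ 2
      - 2 * (1 - 2 * Real.sin x ^ 2 - Real.sin x ^ 4)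
      + (Real.sin x ^ 2 * (Real.sin x ^ 2 + 2) + 7))) * hs

lemma sqle (x : ℝ) : Real.sqrt (1 + Real.sin x ^ 2) ≤ 3 / 2 := by
  have h : (1 : ℝ) + Real.sin x ^ 2 ≤ (3/2)^2 := by nlinarith [Real.sin_sq_le_one x]
  calc Real.sqrt (1 + Real.sin x ^ 2) ≤ Real.sqrt ((3/2)^2) := Real.sqrt_le_sqrt h
    _ = 3/2 := Real.sqrt_sq (by norm_num)

lemma sqge (x : ℝ) : 1 ≤ Real.sqrt (1 + Real.sin x ^ 2) := by
  have h := Real.sqrt_le_sqrt (show (1:ℝ) ≤ 1 + Real.sin x ^ 2 by nlinarith [sq_nonneg (Real.sin x)])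
  simpa using h

lemma num (t r a : ℝ) (ht0 : 0 ≤ t) (ht1 : t ≤ 1) (hr1 : 1 ≤ r) (hr32 : r ≤ 3/2)
    (ha0 : 0 ≤ a) (ha2 : a ^ 2 = t - t ^ 2) :
    (1/16 : ℝ) ≤ max (|1 - 2*t - t^2| / ((1+t) * r)) (a * (t^2 + 2*t + 7) / ((1+t)^2 * r)) := by
  have hrpos : 0 < r := lt_of_lt_of_le one_pos hr1
  by_cases hM : 3/8 ≤ |1 - 2*t - t^2|
  · refine le_trans ?_ (le_max_left _ _)
    rw [le_div_iff₀ (by positivity)]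
    nlinarith
  · push_neg at hM
    rw [abs_lt] at hM
    refine le_trans ?_ (le_max_right _ _)
    have ht5 : 5/24 < t := by nlinarith [mul_nonneg ht0 (by linarith : (0:ℝ) ≤ 1 - t)]
    have ht11 : t < 11/16 := by nlinarith [sq_nonneg t]
    have haa : 25/384 < a^2 := by
      nlinarith [mul_pos (show (0:ℝ) < t - 5/24 by linarith) (show (0:ℝ) < 11/16 - t by linarith)]
    have ha12 : a ≤ 1/2 := by nlinarith [sq_nonneg (2*t - 1)]
    have hax : 1/8 < a := by nlinarith [mul_nonneg ha0 (by linarith : (0:ℝ) ≤ 1/2 - a)]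
    rw [le_div_iff₀ (by positivity)]
    nlinarith [mul_nonneg ha0 (show (0:ℝ) ≤ t^2 + 2*t by positivity)]

lemma key (x : ℝ) : (1/16 : ℝ) ≤ max |KGF2 x| |KGF3 x| := by
  have h2 : |KGF2 x| = |1 - 2*(Real.sin x ^ 2) - (Real.sin x ^ 2)^2| /
      ((1 + Real.sin x ^ 2) * Real.sqrt (1 + Real.sin x ^ 2)) := by
    unfold KGF2
    rw [abs_div, abs_of_pos (show (0:ℝ) < (1 + Real.sin x ^ 2) * Real.sqrt (1 + Real.sin x ^ 2) by positivity)]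
  have h3 : |KGF3 x| = |Real.sin x * Real.cos x| * ((Real.sin x ^ 2)^2 + 2*(Real.sin x ^ 2) + 7) /
      ((1 + Real.sin x ^ 2)^2 * Real.sqrt (1 + Real.sin x ^ 2)) := by
    unfold KGF3
    rw [abs_div, abs_mul, abs_neg,
      abs_of_pos (show (0:ℝ) < (Real.sin x ^ 2)^2 + 2*(Real.sin x ^ 2) + 7 by positivity),
      abs_of_pos (show (0:ℝ) < (1 + Real.sin x ^ 2)^2 * Real.sqrt (1 + Real.sin x ^ 2) by positivity)]
  rw [h2, h3]
  refine num (Real.sin x ^ 2) _ _ (sq_nonneg _) (Real.sin_sq_le_one x) (sqge x) (sqle x)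
    (abs_nonneg _) ?_
  rw [sq_abs]
  linear_combination (Real.sin x ^ 2) * (Real.sin_sq_add_cos_sq x)

lemma deriv1 (s : ℝ) (y : ℝ) :
    HasDerivAt (fun y : ℝ => Real.sqrt (1 + Real.sin y ^ 2) - s * y) (KGF1 y - s) y := by
  have h := (hKGF1 y).sub ((hasDerivAt_id y).const_mul s)
  exact h.congr_deriv (by ring)

/-- Uniform lower bound on the derivatives of the Klein-Gordon phase
    ψ(x) = √(1 + sin²x) − s·x: there is an absolute constant c > 0 (one may take
    c = 1/2) with max(|ψ'(x)|, |ψ''(x)|, |ψ'''(x)|) ≥ c for all s and x. -/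
theorem stmt15 :
    ∃ c : ℝ, 0 < c ∧ ∀ s x : ℝ,
      c ≤ max |iteratedDeriv 1 (fun y : ℝ => Real.sqrt (1 + Real.sin y ^ 2) - s * y) x|
            (max |iteratedDeriv 2 (fun y : ℝ => Real.sqrt (1 + Real.sin y ^ 2) - s * y) x|
                 |iteratedDeriv 3 (fun y : ℝ => Real.sqrt (1 + Real.sin y ^ 2) - s * y) x|) := by
  refine ⟨1/16, by norm_num, fun s x => ?_⟩
  have hd1 : deriv (fun y : ℝ => Real.sqrt (1 + Real.sin y ^ 2) - s * y)
      = fun y => KGF1 y - s := funext fun y => (deriv1 s y).deriv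
  have hd2 : deriv (fun y : ℝ => KGF1 y - s) = KGF2 :=
    funext fun y => ((hKGF2 y).sub_const s).deriv
  have h2 : iteratedDeriv 2 (fun y : ℝ => Real.sqrt (1 + Real.sin y ^ 2) - s * y) x = KGF2 x := by
    rw [show (2:ℕ) = 1 + 1 from rfl, iteratedDeriv_succ, iteratedDeriv_one, hd1, hd2]
  have h3 : iteratedDeriv 3 (fun y : ℝ => Real.sqrt (1 + Real.sin y ^ 2) - s * y) x = KGF3 x := by
    rw [show (3:ℕ) = 2 + 1 from rfl, iteratedDeriv_succ, show (2:ℕ) = 1 + 1 from rfl,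
      iteratedDeriv_succ, iteratedDeriv_one, hd1, hd2]
    exact (hKGF3 x).deriv
  rw [h2, h3]
  exact le_trans (key x) (le_max_right _ _)
end
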